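/- arXiv:2006.08704 — 9 statements merged into one kernel-verified Lean document; each statement's English description precedes it below -/
import Mathlib

section
/- For any group G, the maps c ↦ f^(c) and f ↦ c^(f) are mutually inverse bijections between the set of homogeneous circular orderings on G and the set of inhomogeneous circular orderings on G, where f^(c)(g,h) = 0 if g = 1 or h = 1, f^(c)(g,h) = 1 if gh = 1 and g ≠ 1, and f^(c)(g,h) = (1 − c(1,g,gh))/2 otherwise; and c^(f)(g₁,g₂,g₃) = 0 if two of g₁,g₂,g₃ coincide and c^(f)(g₁,g₂,g₃) = 1 − 2·f(g₁⁻¹g₂, g₂⁻¹g₃) otherwise. -/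
/-- An inhomogeneous circular ordering on a group `G`. -/
def IsInhomCircularOrdering {G : Type*} [Group G] (f : G → G → ℤ) : Prop :=
  (∀ g h : G, f g h = 0 ∨ f g h = 1) ∧
  (∀ g : G, f 1 g = 0 ∧ f g 1 = 0) ∧
  (∀ g : G, g ≠ 1 → f g g⁻¹ = 1) ∧
  (∀ g h k : G, f h k - f (g * h) k + f g (h * k) - f g h = 0)

/-- A homogeneous circular ordering on a group `G`. -/
def IsHomCircularOrdering {G : Type*} [Group G] (c : G → G → G → ℤ) : Prop :=
  (∀ g₁ g₂ g₃ : G, c g₁ g₂ g₃ = 0 ∨ c g₁ g₂ g₃ = 1 ∨ c g₁ g₂ g₃ = -1) ∧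
  (∀ g₁ g₂ g₃ : G, c g₁ g₂ g₃ = 0 ↔ (g₁ = g₂ ∨ g₁ = g₃ ∨ g₂ = g₃)) ∧
  (∀ g₁ g₂ g₃ g₄ : G, c g₂ g₃ g₄ - c g₁ g₃ g₄ + c g₁ g₂ g₄ - c g₁ g₂ g₃ = 0) ∧
  (∀ h g₁ g₂ g₃ : G, c (h * g₁) (h * g₂) (h * g₃) = c g₁ g₂ g₃)

/-- The inhomogeneous cocycle `f^(c)` associated to a homogeneous circular ordering `c`. -/
def fOf {G : Type*} [Group G] [DecidableEq G] (c : G → G → G → ℤ) : G → G → ℤ :=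
  fun g h =>
    if g = 1 ∨ h = 1 then 0
    else if g * h = 1 then 1
    else (1 - c 1 g (g * h)) / 2

/-- The homogeneous cocycle `c^(f)` associated to an inhomogeneous circular ordering `f`. -/
def cOf {G : Type*} [Group G] [DecidableEq G] (f : G → G → ℤ) : G → G → G → ℤ :=
  fun g₁ g₂ g₃ =>
    if g₁ = g₂ ∨ g₁ = g₃ ∨ g₂ = g₃ then 0
    else 1 - 2 * f (g₁⁻¹ * g₂) (g₂⁻¹ * g₃)

section Aux

variable {G : Type*} [Group G] [DecidableEq G]

lemma hom_swap12 {c : G → G → G → ℤ} (hc : IsHomCircularOrdering c) (g₁ g₂ g₃ : G) :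
    c g₂ g₁ g₃ = - c g₁ g₂ g₃ := by
  have h := hc.2.2.1 g₁ g₂ g₁ g₃
  have h1 : c g₁ g₁ g₃ = 0 := (hc.2.1 _ _ _).2 (by tauto)
  have h2 : c g₁ g₂ g₁ = 0 := (hc.2.1 _ _ _).2 (by tauto)
  linarith

lemma hom_swap23 {c : G → G → G → ℤ} (hc : IsHomCircularOrdering c) (g₁ g₂ g₃ : G) :
    c g₁ g₃ g₂ = - c g₁ g₂ g₃ := by
  have h := hc.2.2.1 g₁ g₂ g₃ g₂
  have h1 : c g₂ g₃ g₂ = 0 := (hc.2.1 _ _ _).2 (by tauto)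
  have h2 : c g₁ g₂ g₂ = 0 := (hc.2.1 _ _ _).2 (by tauto)
  linarith

lemma hom_cyc {c : G → G → G → ℤ} (hc : IsHomCircularOrdering c) (g₁ g₂ g₃ : G) :
    c g₂ g₃ g₁ = c g₁ g₂ g₃ := by
  rw [hom_swap23 hc, hom_swap12 hc, hom_swap23 hc]
  ring

lemma fOf_one_left (c : G → G → G → ℤ) (g : G) : fOf c 1 g = 0 := by simp [fOf]

lemma fOf_one_right (c : G → G → G → ℤ) (g : G) : fOf c g 1 = 0 := by simp [fOf]

lemma fOf_inv (c : G → G → G → ℤ) {g : G} (hg : g ≠ 1) : fOf c g g⁻¹ = 1 := by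
  unfold fOf
  rw [if_neg (by simp [hg]), if_pos (mul_inv_cancel g)]

lemma two_mul_fOf {c : G → G → G → ℤ} (hc : IsHomCircularOrdering c)
    {g h : G} (hg : g ≠ 1) (hh : h ≠ 1) (hgh : g * h ≠ 1) :
    2 * fOf c g h = 1 - c 1 g (g * h) := by
  have hne : ¬(1 = g ∨ 1 = g * h ∨ g = g * h) := by
    push_neg
    exact ⟨Ne.symm hg, Ne.symm hgh, fun e => hh (by rwa [left_eq_mul] at e)⟩
  have hv := hc.1 1 g (g * h)
  unfold fOf
  rw [if_neg (by push_neg; exact ⟨hg, hh⟩), if_neg hgh]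
  rcases hv with h0 | h1 | h1
  · exact absurd ((hc.2.1 _ _ _).1 h0) hne
  · rw [h1]; norm_num
  · rw [h1]; norm_num

lemma fOf_is_inhom (c : G → G → G → ℤ) (hc : IsHomCircularOrdering c) :
    IsInhomCircularOrdering (fOf c) := by
  refine ⟨?_, fun g => ⟨fOf_one_left c g, fOf_one_right c g⟩, fun g hg => fOf_inv c hg, ?_⟩
  · intro g h
    by_cases hg : g = 1
    · left; rw [hg, fOf_one_left]
    by_cases hh : h = 1
    · left; rw [hh, fOf_one_right]
    by_cases hgh : g * h = 1
    · right; unfold fOf; rw [if_neg (by push_neg; exact ⟨hg, hh⟩), if_pos hgh]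
    · have := two_mul_fOf hc hg hh hgh
      rcases hc.1 1 g (g * h) with h0 | h1 | h1 <;> omega
  · intro g h k
    by_cases hg : g = 1
    · subst hg; rw [one_mul, fOf_one_left, fOf_one_left]; ring
    by_cases hh : h = 1
    · subst hh; rw [one_mul, mul_one, fOf_one_left, fOf_one_right]; ring
    by_cases hk : k = 1
    · subst hk; rw [mul_one, fOf_one_right, fOf_one_right]; ring
    by_cases hgh : g * h = 1
    · have hh' : h = g⁻¹ := eq_inv_of_mul_eq_one_right hgh
      subst hh'
      rw [hgh, fOf_one_left, fOf_inv c hg]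
      by_cases hk' : g⁻¹ * k = 1
      · have hkg : k = g := (inv_mul_eq_one.mp hk').symm
        rw [hk', fOf_one_right, hkg]
        have h5 : fOf c g⁻¹ g = 1 := by
          have := fOf_inv c (g := g⁻¹) (inv_ne_one.mpr hg)
          rwa [inv_inv] at this
        rw [h5]; ring
      · have e1 := two_mul_fOf hc (inv_ne_one.mpr hg) hk hk'
        have hgk : g * (g⁻¹ * k) ≠ 1 := by rwa [mul_inv_cancel_left]
        have e2 := two_mul_fOf hc hg hk' hgk
        rw [mul_inv_cancel_left] at e2
        have e3 : c 1 g⁻¹ (g⁻¹ * k) = - c 1 g k := by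
          have h4 := hc.2.2.2 g 1 g⁻¹ (g⁻¹ * k)
          rw [mul_one, mul_inv_cancel g, mul_inv_cancel_left] at h4
          rw [← h4, hom_swap12 hc]
        omega
    by_cases hhk : h * k = 1
    · have hk' : k = h⁻¹ := eq_inv_of_mul_eq_one_right hhk
      subst hk'
      rw [hhk, fOf_one_right, fOf_inv c hh]
      have hghh : g * h * h⁻¹ ≠ 1 := by rwa [mul_inv_cancel_right]
      have e1 := two_mul_fOf hc hgh (inv_ne_one.mpr hh) hghh
      rw [mul_inv_cancel_right] at e1
      have e2 := two_mul_fOf hc hg hh hgh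
      have e3 : c 1 (g * h) g = - c 1 g (g * h) := hom_swap23 hc 1 g (g * h)
      omega
    by_cases hghk : g * h * k = 1
    · have hk' : k = (g * h)⁻¹ := eq_inv_of_mul_eq_one_right hghk
      have hhk' : h * k = g⁻¹ := by rw [hk']; group
      rw [show fOf c (g * h) k = 1 from hk' ▸ fOf_inv c hgh, hhk', fOf_inv c hg]
      have e1 := two_mul_fOf hc hh hk hhk
      rw [hhk'] at e1
      have e2 := two_mul_fOf hc hg hh hgh
      have e3 : c 1 h g⁻¹ = c 1 g (g * h) := by
        have h4 := hc.2.2.2 g 1 h g⁻¹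
        rw [mul_one, mul_inv_cancel g] at h4
        rw [← h4, hom_cyc hc]
      omega
    · have e1 := two_mul_fOf hc hh hk hhk
      have e2 := two_mul_fOf hc hgh hk hghk
      have hg_hk : g * (h * k) ≠ 1 := by rwa [← mul_assoc]
      have e3 := two_mul_fOf hc hg hhk hg_hk
      rw [← mul_assoc] at e3
      have e4 := two_mul_fOf hc hg hh hgh
      have hrel := hc.2.2.1 1 g (g * h) (g * h * k)
      have hinv' := hc.2.2.2 g 1 h (h * k)
      rw [mul_one, ← mul_assoc] at hinv'
      omega

/-- Auxiliary: `cOf` in terms of the two "difference" arguments. -/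
def Cfun {G : Type*} [Group G] [DecidableEq G] (f : G → G → ℤ) (x y : G) : ℤ :=
  if x = 1 ∨ y = 1 ∨ x * y = 1 then 0 else 1 - 2 * f x y

lemma cOf_eq (f : G → G → ℤ) (g₁ g₂ g₃ : G) :
    cOf f g₁ g₂ g₃ = Cfun f (g₁⁻¹ * g₂) (g₂⁻¹ * g₃) := by
  unfold cOf Cfun
  rw [show (g₁⁻¹ * g₂) * (g₂⁻¹ * g₃) = g₁⁻¹ * g₃ by group]
  simp only [inv_mul_eq_one]
  by_cases hd : g₁ = g₂ ∨ g₁ = g₃ ∨ g₂ = g₃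
  · rw [if_pos hd, if_pos (by tauto)]
  · rw [if_neg hd, if_neg (by tauto)]

lemma Cfun_one_left (f : G → G → ℤ) (a : G) : Cfun f 1 a = 0 := by simp [Cfun]

lemma Cfun_one_right (f : G → G → ℤ) (a : G) : Cfun f a 1 = 0 := by simp [Cfun]

lemma Cfun_inv (f : G → G → ℤ) (a : G) : Cfun f a a⁻¹ = 0 := by simp [Cfun]

lemma Cfun_gen (f : G → G → ℤ) {a b : G} (ha : a ≠ 1) (hb : b ≠ 1) (hab : a * b ≠ 1) :
    Cfun f a b = 1 - 2 * f a b := by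
  simp [Cfun, ha, hb, hab]

lemma Cfun_coc {f : G → G → ℤ} (hf : IsInhomCircularOrdering f) (x y z : G) :
    Cfun f y z - Cfun f (x * y) z + Cfun f x (y * z) - Cfun f x y = 0 := by
  obtain ⟨hval, hone, hinv, hcoc⟩ := hf
  by_cases hx : x = 1
  · subst hx; simp only [one_mul, Cfun_one_left]; ring
  by_cases hy : y = 1
  · subst hy; simp only [one_mul, mul_one, Cfun_one_left, Cfun_one_right]; ring
  by_cases hz : z = 1
  · subst hz; simp only [mul_one, Cfun_one_right]; ring
  by_cases hxy : x * y = 1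
  · have hy' : y = x⁻¹ := eq_inv_of_mul_eq_one_right hxy
    subst hy'
    rw [hxy, Cfun_one_left, Cfun_inv]
    by_cases hz' : x⁻¹ * z = 1
    · have hzx : z = x := (inv_mul_eq_one.mp hz').symm
      rw [hzx, show (x⁻¹ * x : G) = 1 from inv_mul_cancel x, Cfun_one_right]
      have : Cfun f x⁻¹ x = 0 := by
        have := Cfun_inv f x⁻¹
        rwa [inv_inv] at this
      rw [this]; ring
    · have e1 := Cfun_gen f (inv_ne_one.mpr hx) hz hz'
      have hxz : x * (x⁻¹ * z) ≠ 1 := by rwa [mul_inv_cancel_left]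
      have e2 := Cfun_gen f hx hz' hxz
      have hc := hcoc x x⁻¹ z
      rw [hxy, (hone z).1, hinv x hx] at hc
      omega
  by_cases hyz : y * z = 1
  · have hz' : z = y⁻¹ := eq_inv_of_mul_eq_one_right hyz
    subst hz'
    rw [hyz, Cfun_one_right]
    have h5 : Cfun f y y⁻¹ = 0 := Cfun_inv f y
    rw [h5]
    have hxyz : (x * y) * y⁻¹ ≠ 1 := by rwa [mul_inv_cancel_right]
    have e1 := Cfun_gen f hxy (inv_ne_one.mpr hy) hxyz
    have e2 := Cfun_gen f hx hy hxy
    have hc := hcoc x y y⁻¹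
    rw [hyz, (hone x).2, hinv y hy] at hc
    omega
  by_cases hxyz : x * y * z = 1
  · have hz' : z = (x * y)⁻¹ := eq_inv_of_mul_eq_one_right hxyz
    have hyz' : y * z = x⁻¹ := by rw [hz']; group
    rw [show Cfun f (x * y) z = 0 from hz' ▸ Cfun_inv f (x * y), hyz', Cfun_inv]
    have e1 := Cfun_gen f hy hz hyz
    have e2 := Cfun_gen f hx hy hxy
    have hc := hcoc x y z
    rw [show f (x * y) z = 1 from hz' ▸ hinv (x * y) hxy,
      show f x (y * z) = 1 from by rw [hyz']; exact hinv x hx] at hc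
    omega
  · have e1 := Cfun_gen f hy hz hyz
    have e2 := Cfun_gen f hxy hz hxyz
    have hxyz' : x * (y * z) ≠ 1 := by rwa [← mul_assoc]
    have e3 := Cfun_gen f hx hyz hxyz'
    have e4 := Cfun_gen f hx hy hxy
    have hc := hcoc x y z
    omega

lemma cOf_is_hom (f : G → G → ℤ) (hf : IsInhomCircularOrdering f) :
    IsHomCircularOrdering (cOf f) := by
  refine ⟨?_, ?_, ?_, ?_⟩
  · intro g₁ g₂ g₃
    unfold cOf
    split_ifs with h
    · left; rfl
    · rcases hf.1 (g₁⁻¹ * g₂) (g₂⁻¹ * g₃) with e | e <;> rw [e] <;> norm_num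
  · intro g₁ g₂ g₃
    unfold cOf
    split_ifs with h
    · simp [h]
    · simp only [h, iff_false]
      rcases hf.1 (g₁⁻¹ * g₂) (g₂⁻¹ * g₃) with e | e <;> rw [e] <;> norm_num
  · intro g₁ g₂ g₃ g₄
    rw [cOf_eq, cOf_eq, cOf_eq, cOf_eq]
    have h := Cfun_coc hf (g₁⁻¹ * g₂) (g₂⁻¹ * g₃) (g₃⁻¹ * g₄)
    rw [show (g₁⁻¹ * g₂) * (g₂⁻¹ * g₃) = g₁⁻¹ * g₃ by group,
      show (g₂⁻¹ * g₃) * (g₃⁻¹ * g₄) = g₂⁻¹ * g₄ by group] at h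
    exact h
  · intro h g₁ g₂ g₃
    rw [cOf_eq, cOf_eq]
    congr 1 <;> group

lemma cOf_fOf (c : G → G → G → ℤ) (hc : IsHomCircularOrdering c) : cOf (fOf c) = c := by
  funext g₁ g₂ g₃
  unfold cOf
  split_ifs with hd
  · exact ((hc.2.1 _ _ _).2 hd).symm
  · push_neg at hd
    obtain ⟨h12, h13, h23⟩ := hd
    have hx : g₁⁻¹ * g₂ ≠ 1 := fun e => h12 (inv_mul_eq_one.mp e)
    have hy : g₂⁻¹ * g₃ ≠ 1 := fun e => h23 (inv_mul_eq_one.mp e)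
    have hxy : (g₁⁻¹ * g₂) * (g₂⁻¹ * g₃) ≠ 1 := by
      rw [show (g₁⁻¹ * g₂) * (g₂⁻¹ * g₃) = g₁⁻¹ * g₃ by group]
      exact fun e => h13 (inv_mul_eq_one.mp e)
    have e := two_mul_fOf hc hx hy hxy
    rw [show (g₁⁻¹ * g₂) * (g₂⁻¹ * g₃) = g₁⁻¹ * g₃ by group] at e
    have einv := hc.2.2.2 g₁ 1 (g₁⁻¹ * g₂) (g₁⁻¹ * g₃)
    rw [mul_one, mul_inv_cancel_left, mul_inv_cancel_left] at einv
    omega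

lemma fOf_cOf (f : G → G → ℤ) (hf : IsInhomCircularOrdering f) : fOf (cOf f) = f := by
  funext g h
  unfold fOf
  split_ifs with h1 h2
  · rcases h1 with e | e <;> subst e
    · exact ((hf.2.1 h).1).symm
    · exact ((hf.2.1 g).2).symm
  · push_neg at h1
    have hh : h = g⁻¹ := eq_inv_of_mul_eq_one_right h2
    subst hh
    exact (hf.2.2.1 g h1.1).symm
  · push_neg at h1
    have hcv : cOf f 1 g (g * h) = 1 - 2 * f g h := by
      unfold cOf
      rw [if_neg, inv_one, one_mul, inv_mul_cancel_left]
      push_neg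
      exact ⟨Ne.symm h1.1, Ne.symm h2, fun e => h1.2 ((left_eq_mul).mp e)⟩
    rw [hcv]
    rcases hf.1 g h with e | e <;> rw [e] <;> norm_num

end Aux

/-- The maps `c ↦ f^(c)` and `f ↦ c^(f)` are mutually inverse bijections between
homogeneous circular orderings and inhomogeneous circular orderings on `G`. -/
theorem hom_inhom_circular_ordering_equiv {G : Type*} [Group G] [DecidableEq G] :
    (∀ c : G → G → G → ℤ, IsHomCircularOrdering c → IsInhomCircularOrdering (fOf c)) ∧
    (∀ f : G → G → ℤ, IsInhomCircularOrdering f → IsHomCircularOrdering (cOf f)) ∧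
    (∀ c : G → G → G → ℤ, IsHomCircularOrdering c → cOf (fOf c) = c) ∧
    (∀ f : G → G → ℤ, IsInhomCircularOrdering f → fOf (cOf f) = f) :=
  ⟨fOf_is_inhom, cOf_is_hom, cOf_fOf, fOf_cOf⟩
end

section
/- Let G be a group with an inhomogeneous circular ordering f. Then the set ℤ × G with operation (a,g)(b,h) = (a + b + f(g,h), gh) is a group G̃_∞ (with identity (0,1)); the subset P = {(a,g) ∈ G̃_∞ : a ≥ 0} \ {(0,1)} is a positive cone, i.e., P·P ⊆ P and G̃_∞ is the disjoint union of P, P⁻¹, and {(0,1)}; and in the corresponding left ordering the element (1,1) is positive, central, and cofinal (for every x ∈ G̃_∞ there is t ∈ ℕ with (1,1)^(−t) < x < (1,1)^t). In particular G̃_∞ is left-orderable. -/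
/-- An inhomogeneous circular ordering on a group `G`. -/
def IsCircularOrdering {G : Type*} [Group G] (f : G → G → ℤ) : Prop :=
  (∀ g h : G, f g h = 0 ∨ f g h = 1) ∧
  (∀ g : G, f 1 g = 0 ∧ f g 1 = 0) ∧
  (∀ g : G, g ≠ 1 → f g g⁻¹ = 1) ∧
  (∀ g h k : G, f h k - f (g * h) k + f g (h * k) - f g h = 0)

/-- A group is circularly-orderable if it admits an inhomogeneous circular ordering. -/
def CircularlyOrderable (G : Type*) [Group G] : Prop :=
  ∃ f : G → G → ℤ, IsCircularOrdering f

/-- A group is left-orderable if it admits a strict total order invariant under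
left multiplication. -/
def LeftOrderable (G : Type*) [Group G] : Prop :=
  ∃ r : G → G → Prop, IsStrictTotalOrder G r ∧ ∀ a b c : G, r b c → r (a * b) (a * c)

/-- Construction of the left-ordered central extension `G̃_∞` of a circularly-ordered
group `(G, f)`: `ℤ × G` with the twisted multiplication is a group, the set
`P = {(a,g) : a ≥ 0} \ {(0,1)}` is a positive cone, and `(1,1)` is a positive,
central, cofinal element for the induced left ordering; in particular `G̃_∞`
is left-orderable. -/
theorem central_extension_left_orderable {G : Type*} [Group G] (f : G → G → ℤ)
    (hf : IsCircularOrdering f)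
    (mul : ℤ × G → ℤ × G → ℤ × G)
    (hmul : ∀ x y : ℤ × G, mul x y = (x.1 + y.1 + f x.2 y.2, x.2 * y.2)) :
    ∃ inv : ℤ × G → ℤ × G,
      -- `ℤ × G` with this operation is a group with identity `(0,1)`
      (∀ x y z : ℤ × G, mul (mul x y) z = mul x (mul y z)) ∧
      (∀ x : ℤ × G, mul ((0 : ℤ), (1 : G)) x = x) ∧
      (∀ x : ℤ × G, mul x ((0 : ℤ), (1 : G)) = x) ∧
      (∀ x : ℤ × G, mul (inv x) x = ((0 : ℤ), (1 : G))) ∧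
      (∀ x : ℤ × G, mul x (inv x) = ((0 : ℤ), (1 : G))) ∧
      (let P : Set (ℤ × G) := {x : ℤ × G | 0 ≤ x.1} \ {((0 : ℤ), (1 : G))}
       let lt : ℤ × G → ℤ × G → Prop := fun x y => mul (inv x) y ∈ P
       -- `P` is a positive cone: `P · P ⊆ P` and the group is `P ⊔ P⁻¹ ⊔ {id}`
       (∀ x ∈ P, ∀ y ∈ P, mul x y ∈ P) ∧
       (∀ x : ℤ × G,
          (x ∈ P ∧ inv x ∉ P ∧ x ≠ ((0 : ℤ), (1 : G))) ∨
          (x ∉ P ∧ inv x ∈ P ∧ x ≠ ((0 : ℤ), (1 : G))) ∨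
          (x ∉ P ∧ inv x ∉ P ∧ x = ((0 : ℤ), (1 : G)))) ∧
       -- the corresponding left ordering: a strict total order invariant under
       -- left multiplication; in particular the group is left-orderable
       IsStrictTotalOrder (ℤ × G) lt ∧
       (∀ z x y : ℤ × G, lt x y → lt (mul z x) (mul z y)) ∧
       -- `(1,1)` is positive and central
       ((1 : ℤ), (1 : G)) ∈ P ∧
       (∀ x : ℤ × G, mul ((1 : ℤ), (1 : G)) x = mul x ((1 : ℤ), (1 : G))) ∧
       -- `(1,1)` is cofinal
       (∀ pow : ℤ × G → ℕ → ℤ × G,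
          (∀ x : ℤ × G, pow x 0 = ((0 : ℤ), (1 : G))) →
          (∀ (x : ℤ × G) (t : ℕ), pow x (t + 1) = mul (pow x t) x) →
          ∀ x : ℤ × G, ∃ t : ℕ,
            lt (inv (pow ((1 : ℤ), (1 : G)) t)) x ∧ lt x (pow ((1 : ℤ), (1 : G)) t))) := by

  obtain ⟨h01, hid, hginv, hcoc⟩ := hf
  have fnn : ∀ g h : G, 0 ≤ f g h := by
    intro g h; rcases h01 g h with h' | h' <;> omega
  have fsym : ∀ g : G, f g⁻¹ g = f g g⁻¹ := by
    intro g
    have h := hcoc g g⁻¹ g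
    rw [mul_inv_cancel, inv_mul_cancel, (hid g).1, (hid g).2] at h
    omega
  set e : ℤ × G := ((0 : ℤ), (1 : G)) with he
  set inv : ℤ × G → ℤ × G := fun x => (-x.1 - f x.2 x.2⁻¹, x.2⁻¹) with hinvdef
  have hassoc : ∀ x y z : ℤ × G, mul (mul x y) z = mul x (mul y z) := by
    intro x y z
    have h := hcoc x.2 y.2 z.2
    simp only [hmul, Prod.mk.injEq]
    exact ⟨by omega, mul_assoc _ _ _⟩
  have hlid : ∀ x : ℤ × G, mul e x = x := by
    intro x
    simp only [hmul, he, (hid x.2).1]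
    simp
  have hrid : ∀ x : ℤ × G, mul x e = x := by
    intro x
    simp only [hmul, he, (hid x.2).2]
    simp
  have hrinv : ∀ x : ℤ × G, mul x (inv x) = e := by
    intro x
    simp only [hmul, hinvdef, he, Prod.mk.injEq, mul_inv_cancel, and_true]
    omega
  have hlinv : ∀ x : ℤ × G, mul (inv x) x = e := by
    intro x
    simp only [hmul, hinvdef, he, Prod.mk.injEq, inv_mul_cancel, and_true]
    have := fsym x.2
    omega
  have hinve : inv e = e := by
    simp only [hinvdef, he, inv_one, Prod.mk.injEq, (hid 1).1, and_true]
    omega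
  have hinvinv : ∀ x : ℤ × G, inv (inv x) = x := by
    intro x
    have := fsym x.2
    refine Prod.ext ?_ (inv_inv x.2)
    show -(-x.1 - f x.2 x.2⁻¹) - f x.2⁻¹ x.2⁻¹⁻¹ = x.1
    rw [inv_inv]
    omega
  have huniq : ∀ a b : ℤ × G, mul a b = e → b = inv a := by
    intro a b h
    calc b = mul e b := (hlid b).symm
    _ = mul (mul (inv a) a) b := by rw [hlinv]
    _ = mul (inv a) (mul a b) := hassoc _ _ _
    _ = mul (inv a) e := by rw [h]
    _ = inv a := hrid _
  have hinvmul : ∀ a b : ℤ × G, inv (mul a b) = mul (inv b) (inv a) := by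
    intro a b
    refine (huniq _ _ ?_).symm
    calc mul (mul a b) (mul (inv b) (inv a))
        = mul a (mul b (mul (inv b) (inv a))) := hassoc _ _ _
      _ = mul a (mul (mul b (inv b)) (inv a)) := by rw [hassoc]
      _ = mul a (mul e (inv a)) := by rw [hrinv]
      _ = mul a (inv a) := by rw [hlid]
      _ = e := hrinv a
  refine ⟨inv, hassoc, hlid, hrid, hlinv, hrinv, ?_⟩
  intro P lt
  have hPmem : ∀ x : ℤ × G, x ∈ P ↔ 0 ≤ x.1 ∧ x ≠ e := by
    intro x
    show x ∈ {x : ℤ × G | 0 ≤ x.1} \ {e} ↔ _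
    simp [Set.mem_diff]
  have hltdef : ∀ x y : ℤ × G, lt x y ↔ mul (inv x) y ∈ P := fun _ _ => Iff.rfl
  have hne_of_fst : ∀ x : ℤ × G, x.1 ≠ 0 → x ≠ e := by
    intro x hx h
    rw [h] at hx
    exact hx rfl
  -- P · P ⊆ P
  have hPP : ∀ x ∈ P, ∀ y ∈ P, mul x y ∈ P := by
    intro x hx y hy
    obtain ⟨hx1, hxe⟩ := (hPmem x).1 hx
    obtain ⟨hy1, hye⟩ := (hPmem y).1 hy
    rw [hPmem]
    have hf1 := fnn x.2 y.2
    constructor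
    · simp only [hmul]; omega
    · intro h
      rw [hmul] at h
      have h1 : x.1 + y.1 + f x.2 y.2 = 0 := congrArg Prod.fst h
      have h2 : x.2 * y.2 = 1 := congrArg Prod.snd h
      have hx10 : x.1 = 0 := by omega
      have hy10 : y.1 = 0 := by omega
      have hfxy : f x.2 y.2 = 0 := by omega
      have hyinv : y.2 = x.2⁻¹ := (mul_eq_one_iff_inv_eq.mp h2).symm
      by_cases hx2 : x.2 = 1
      · exact hxe (Prod.ext hx10 hx2)
      · have := hginv x.2 hx2
        rw [hyinv] at hfxy
        omega
  -- trichotomy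
  have htri : ∀ x : ℤ × G,
      (x ∈ P ∧ inv x ∉ P ∧ x ≠ e) ∨
      (x ∉ P ∧ inv x ∈ P ∧ x ≠ e) ∨
      (x ∉ P ∧ inv x ∉ P ∧ x = e) := by
    intro x
    by_cases hx : x = e
    · right; right
      refine ⟨?_, ?_, hx⟩
      · rw [hPmem]; tauto
      · rw [hx, hinve, hPmem]; tauto
    · have hxinvne : inv x ≠ e := by
        intro h
        apply hx
        rw [← hinvinv x, h, hinve]
      have hc := h01 x.2 x.2⁻¹
      have hinv1 : (inv x).1 = -x.1 - f x.2 x.2⁻¹ := rfl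
      have key : (0 ≤ x.1 ∧ ¬ 0 ≤ -x.1 - f x.2 x.2⁻¹) ∨
                 (¬ 0 ≤ x.1 ∧ 0 ≤ -x.1 - f x.2 x.2⁻¹) := by
        by_cases h2 : x.2 = 1
        · have hx1 : x.1 ≠ 0 := by
            intro h0
            exact hx (Prod.ext h0 h2)
          have : f x.2 x.2⁻¹ = 0 := by rw [h2]; exact ((hid 1⁻¹).1)
          omega
        · have := hginv x.2 h2
          omega
      rcases key with ⟨k1, k2⟩ | ⟨k1, k2⟩
      · left
        refine ⟨(hPmem x).2 ⟨k1, hx⟩, ?_, hx⟩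
        rw [hPmem, hinv1]
        tauto
      · right; left
        refine ⟨?_, (hPmem _).2 ⟨by rw [hinv1]; exact k2, hxinvne⟩, hx⟩
        rw [hPmem]
        tauto
  -- transitivity helper
  have hltmul : ∀ x y z : ℤ × G, mul (mul (inv x) y) (mul (inv y) z) = mul (inv x) z := by
    intro x y z
    calc mul (mul (inv x) y) (mul (inv y) z)
        = mul (inv x) (mul y (mul (inv y) z)) := hassoc _ _ _
      _ = mul (inv x) (mul (mul y (inv y)) z) := by rw [hassoc]
      _ = mul (inv x) (mul e z) := by rw [hrinv]
      _ = mul (inv x) z := by rw [hlid]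
  have hirr : ∀ x : ℤ × G, ¬ lt x x := by
    intro x h
    rw [hltdef, hlinv, hPmem] at h
    exact h.2 rfl
  have htrans : ∀ x y z : ℤ × G, lt x y → lt y z → lt x z := by
    intro x y z hxy hyz
    rw [hltdef] at *
    have := hPP _ hxy _ hyz
    rwa [hltmul] at this
  have htricho : ∀ x y : ℤ × G, lt x y ∨ x = y ∨ lt y x := by
    intro x y
    rcases htri (mul (inv x) y) with ⟨h1, _, _⟩ | ⟨_, h2, _⟩ | ⟨_, _, h3⟩
    · left; exact h1
    · right; right
      rw [hltdef]
      rw [hinvmul, hinvinv] at h2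
      exact h2
    · right; left
      have : mul x (mul (inv x) y) = mul x e := by rw [h3]
      rw [← hassoc, hrinv, hlid, hrid] at this
      exact this.symm
  have hsto : IsStrictTotalOrder (ℤ × G) lt :=
    { trichotomous := fun a b h1 h2 => ((htricho a b).resolve_left h1).resolve_right h2
      irrefl := hirr
      trans := htrans }
  have hmono : ∀ z x y : ℤ × G, lt x y → lt (mul z x) (mul z y) := by
    intro z x y h
    rw [hltdef] at *
    have heq : mul (inv (mul z x)) (mul z y) = mul (inv x) y := by
      rw [hinvmul]
      calc mul (mul (inv x) (inv z)) (mul z y)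
          = mul (inv x) (mul (inv z) (mul z y)) := hassoc _ _ _
        _ = mul (inv x) (mul (mul (inv z) z) y) := by rw [hassoc]
        _ = mul (inv x) (mul e y) := by rw [hlinv]
        _ = mul (inv x) y := by rw [hlid]
    rwa [heq]
  have h11P : ((1 : ℤ), (1 : G)) ∈ P := by
    rw [hPmem]
    exact ⟨by norm_num, by intro h; have := congrArg Prod.fst h; simp [he] at this⟩
  have hcent : ∀ x : ℤ × G, mul ((1 : ℤ), (1 : G)) x = mul x ((1 : ℤ), (1 : G)) := by
    intro x
    simp only [hmul, (hid x.2).1, (hid x.2).2, Prod.mk.injEq]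
    exact ⟨by ring, by group⟩
  refine ⟨hPP, htri, hsto, hmono, h11P, hcent, ?_⟩
  intro pow hpow0 hpowS x
  have hpow : ∀ t : ℕ, pow ((1 : ℤ), (1 : G)) t = ((t : ℤ), (1 : G)) := by
    intro t
    induction t with
    | zero => simpa using hpow0 _
    | succ n ih =>
      rw [hpowS, ih, hmul]
      simp only [(hid 1).1, Prod.mk.injEq]
      exact ⟨by push_cast; ring, one_mul 1⟩
  refine ⟨x.1.natAbs + 2, ?_, ?_⟩
  · rw [hltdef, hpow, hinvinv, hmul, hPmem]
    constructor
    · show 0 ≤ ((x.1.natAbs + 2 : ℕ) : ℤ) + x.1 + f 1 x.2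
      rw [(hid x.2).1]
      omega
    · apply hne_of_fst
      show ((x.1.natAbs + 2 : ℕ) : ℤ) + x.1 + f 1 x.2 ≠ 0
      rw [(hid x.2).1]
      omega
  · rw [hltdef, hpow, hmul, hPmem]
    have hc := h01 x.2 x.2⁻¹
    constructor
    · show 0 ≤ (-x.1 - f x.2 x.2⁻¹) + ((x.1.natAbs + 2 : ℕ) : ℤ) + f x.2⁻¹ 1
      rw [(hid x.2⁻¹).2]
      omega
    · apply hne_of_fst
      show (-x.1 - f x.2 x.2⁻¹) + ((x.1.natAbs + 2 : ℕ) : ℤ) + f x.2⁻¹ 1 ≠ 0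
      rw [(hid x.2⁻¹).2]
      omega
end

section
/- If a group G admits an inhomogeneous circular ordering f that is an inhomogeneous 2-coboundary with integer coefficients — that is, there exists a function d : G → ℤ with f(g,h) = d(g) + d(h) − d(gh) for all g,h ∈ G — then G is left-orderable. -/
/-- If a group admits a circular ordering that is a coboundary
(i.e. represents the trivial class in `H²(G;ℤ)`), then it is left-orderable. -/
theorem leftOrderable_of_circular_ordering_coboundary {G : Type*} [Group G]
    (f : G → G → ℤ) (hf : IsCircularOrdering f)
    (d : G → ℤ) (hd : ∀ g h : G, f g h = d g + d h - d (g * h)) :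
    LeftOrderable G := by
  obtain ⟨h01, hunit, hinv, _⟩ := hf
  -- d 1 = 0
  have hd1 : d 1 = 0 := by
    have := (hunit 1).1
    have h := hd 1 1
    simp at h
    omega
  -- for g ≠ 1, d g + d g⁻¹ = 1
  have hsum : ∀ g : G, g ≠ 1 → d g + d g⁻¹ = 1 := by
    intro g hg
    have h1 := hinv g hg
    have h2 := hd g g⁻¹
    rw [mul_inv_cancel] at h2
    omega
  -- d (g*h) ≥ d g + d h - 1
  have hmul : ∀ g h : G, d g + d h - d (g * h) ≤ 1 := by
    intro g h
    have := hd g h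
    rcases h01 g h with h' | h' <;> omega
  refine ⟨fun g h => 1 ≤ d (g⁻¹ * h), ?_, ?_⟩
  · refine { irrefl := ?ir, trans := ?tr, trichotomous := ?tri }
    case ir =>
      intro a ha
      have ha' : 1 ≤ d (a⁻¹ * a) := ha
      rw [inv_mul_cancel, hd1] at ha'
      omega
    case tr =>
      intro a b c hab hbc
      have hab' : 1 ≤ d (a⁻¹ * b) := hab
      have hbc' : 1 ≤ d (b⁻¹ * c) := hbc
      show 1 ≤ d (a⁻¹ * c)
      have := hmul (a⁻¹ * b) (b⁻¹ * c)
      have he : a⁻¹ * b * (b⁻¹ * c) = a⁻¹ * c := by group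
      rw [he] at this
      omega
    case tri =>
      intro a b
      by_cases h : a = b
      · exact fun _ _ => h
      have hne : a⁻¹ * b ≠ 1 := by
        intro hc
        apply h
        have h2 : a * (a⁻¹ * b) = a * 1 := by rw [hc]
        have h3 : b = a := by simpa using h2
        exact h3.symm
      have hs := hsum (a⁻¹ * b) hne
      have he : (a⁻¹ * b)⁻¹ = b⁻¹ * a := by group
      rw [he] at hs
      rcases le_or_gt 1 (d (a⁻¹ * b)) with h1 | h1
      · exact fun hn _ => (hn h1).elim
      · exact fun _ hn => (hn (by show 1 ≤ d (b⁻¹ * a); omega)).elim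
  · intro a b c hbc
    have he : (a * b)⁻¹ * (a * c) = b⁻¹ * c := by group
    rw [he]
    exact hbc
end

section
/- Let (G,<) be a left-ordered group and let z ∈ G be a positive, cofinal, central element. For g ∈ G let ḡ denote the unique element of the coset g⟨z⟩ with 1 ≤ ḡ < z, and define f_η : (G/⟨z⟩)² → ℤ by the equation ḡ·h̄ = z^{f_η(g⟨z⟩,h⟨z⟩)} · (overline{gh}). Then f_η is an inhomogeneous circular ordering on the quotient group G/⟨z⟩. -/
/-- Construction: if `(G,<)` is a left-ordered group and `z` is a positive, cofinal,
central element, then the cocycle `f_η` associated to the normalized section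
`g⟨z⟩ ↦ ḡ` (where `ḡ` is the unique coset representative with `1 ≤ ḡ < z`)
is a circular ordering on `G/⟨z⟩`. -/
theorem quotient_circular_ordering {G : Type*} [Group G] [LinearOrder G]
    [CovariantClass G G (· * ·) (· < ·)]
    (z : G) [hN : (Subgroup.zpowers z).Normal]
    (hz_pos : 1 < z)
    (hz_central : ∀ g : G, z * g = g * z)
    (hz_cofinal : ∀ g : G, ∃ t : ℕ, z ^ (-(t : ℤ)) < g ∧ g < z ^ (t : ℤ))
    (bar : G → G)
    (hbar_coset : ∀ g : G, ∃ k : ℤ, bar g = g * z ^ k)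
    (hbar_min : ∀ g : G, 1 ≤ bar g ∧ bar g < z) :
    ∃ fη : G ⧸ Subgroup.zpowers z → G ⧸ Subgroup.zpowers z → ℤ,
      (∀ g h : G,
        bar g * bar h =
          z ^ fη (g : G ⧸ Subgroup.zpowers z) (h : G ⧸ Subgroup.zpowers z) * bar (g * h)) ∧
      IsCircularOrdering fη := by
  classical
  haveI covle : CovariantClass G G (· * ·) (· ≤ ·) := ⟨by
    intro a b c h
    rcases lt_or_eq_of_le h with h | h
    · exact le_of_lt (mul_lt_mul_right h a)
    · rw [h]⟩
  -- powers of `z` commute with everything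
  have comm : ∀ (g : G) (k : ℤ), z ^ k * g = g * z ^ k := fun g k =>
    (Commute.zpow_left (hz_central g) k).eq
  -- strict monotonicity of `k ↦ z ^ k`
  have one_lt_zpow : ∀ n : ℤ, 0 < n → 1 < z ^ n := by
    intro n hn
    have hnat : ∀ m : ℕ, 0 < m → 1 < z ^ m := by
      intro m hm
      induction m with
      | zero => omega
      | succ k ih =>
        rcases Nat.eq_zero_or_pos k with hk | hk
        · subst hk; simpa using hz_pos
        · calc (1 : G) < z ^ k := ih hk
            _ = z ^ k * 1 := (mul_one _).symm
            _ < z ^ k * z := mul_lt_mul_right hz_pos _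
            _ = z ^ (k + 1) := (pow_succ z k).symm
    have : z ^ n = z ^ n.toNat := by
      rw [← zpow_natCast]
      congr 1
      omega
    rw [this]
    exact hnat n.toNat (by omega)
  have zmono : StrictMono (fun k : ℤ => z ^ k) := by
    intro a b hab
    have h1 : (1 : G) < z ^ (b - a) := one_lt_zpow _ (by omega)
    calc z ^ a = z ^ a * 1 := (mul_one _).symm
      _ < z ^ a * z ^ (b - a) := mul_lt_mul_right h1 _
      _ = z ^ b := by rw [← zpow_add, show a + (b - a) = b from by omega]
  -- cancellation of powers of z
  have zuniq : ∀ (m k : ℤ) (x : G), z ^ m * x = z ^ k * x → m = k := by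
    intro m k x h
    exact zmono.injective (mul_right_cancel h)
  -- combining coset representatives
  have mulz : ∀ (g h : G) (a b : ℤ), (g * z ^ a) * (h * z ^ b) = g * h * z ^ (a + b) := by
    intro g h a b
    rw [mul_assoc g, ← mul_assoc (z ^ a), comm h a, mul_assoc h, ← zpow_add, ← mul_assoc]
  -- uniqueness of the normalized representative
  have bar_unique : ∀ a b : G, (∃ k : ℤ, b = a * z ^ k) →
      1 ≤ a → a < z → 1 ≤ b → b < z → a = b := by
    rintro a b ⟨k, hk⟩ ha1 haz hb1 hbz
    have hainv_le : a⁻¹ ≤ 1 := by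
      have := mul_le_mul_right ha1 a⁻¹
      simpa using this
    have hzk : z ^ k = a⁻¹ * b := by rw [hk, ← mul_assoc, inv_mul_cancel, one_mul]
    have hlt1 : z ^ k < z ^ (1 : ℤ) := by
      have h1 : a⁻¹ * b < a⁻¹ * z := mul_lt_mul_right hbz a⁻¹
      have h2 : a⁻¹ * z ≤ z := by
        calc a⁻¹ * z = z * a⁻¹ := (hz_central a⁻¹).symm
          _ ≤ z * 1 := mul_le_mul_right hainv_le z
          _ = z := mul_one z
      rw [hzk, zpow_one]
      exact lt_of_lt_of_le h1 h2
    have hgt : z ^ (-1 : ℤ) < z ^ k := by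
      have h1 : a⁻¹ ≤ a⁻¹ * b := by
        have := mul_le_mul_right hb1 a⁻¹
        simpa using this
      have h2 : (1 : G) < a⁻¹ * z := by
        have := mul_lt_mul_right haz a⁻¹
        simpa using this
      have h2' : (1 : G) < z * a⁻¹ := by rw [hz_central a⁻¹]; exact h2
      have h3 : z⁻¹ < a⁻¹ := by
        have := mul_lt_mul_right h2' z⁻¹
        rwa [mul_one, ← mul_assoc, inv_mul_cancel, one_mul] at this
      rw [hzk, zpow_neg, zpow_one]
      exact lt_of_lt_of_le h3 h1
    have hk1 : k < 1 := zmono.lt_iff_lt.mp hlt1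
    have hk2 : -1 < k := zmono.lt_iff_lt.mp hgt
    have : k = 0 := by omega
    rw [hk, this, zpow_zero, mul_one]
  -- bar only depends on the coset
  have bar_coset : ∀ g h : G, (∃ k : ℤ, h = g * z ^ k) → bar g = bar h := by
    rintro g h ⟨k, hk⟩
    obtain ⟨a, ha⟩ := hbar_coset g
    obtain ⟨b, hb⟩ := hbar_coset h
    refine bar_unique (bar g) (bar h) ⟨k + b - a, ?_⟩ (hbar_min g).1 (hbar_min g).2
      (hbar_min h).1 (hbar_min h).2
    rw [hb, hk, ha, mul_assoc g, ← zpow_add, mul_assoc g, ← zpow_add,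
      show a + (k + b - a) = k + b from by omega]
  -- value of bar at 1
  have bar_one : bar 1 = 1 := by
    obtain ⟨a, ha⟩ := hbar_coset 1
    rw [one_mul] at ha
    have h1 : z ^ (0 : ℤ) ≤ z ^ a := by
      rw [zpow_zero, ← ha]; exact (hbar_min 1).1
    have h2 : z ^ a < z ^ (1 : ℤ) := by
      rw [zpow_one, ← ha]; exact (hbar_min 1).2
    have ha0 : a = 0 := by
      have e1 := zmono.le_iff_le.mp h1
      have e2 := zmono.lt_iff_lt.mp h2
      omega
    rw [ha, ha0, zpow_zero]
  -- definition of the cocycle on representatives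
  have Fex : ∀ g h : G, ∃ m : ℤ, bar g * bar h = z ^ m * bar (g * h) := by
    intro g h
    obtain ⟨a, ha⟩ := hbar_coset g
    obtain ⟨b, hb⟩ := hbar_coset h
    obtain ⟨c, hc⟩ := hbar_coset (g * h)
    refine ⟨a + b - c, ?_⟩
    rw [ha, hb, hc, mulz, comm (g * h * z ^ c) (a + b - c), mul_assoc (g * h), ← zpow_add,
      show c + (a + b - c) = a + b from by omega]
  choose F hF using Fex
  -- well-definedness of F on cosets
  have Fcongr : ∀ g g' h h' : G,
      ((g : G ⧸ Subgroup.zpowers z) = g') → ((h : G ⧸ Subgroup.zpowers z) = h') →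
      F g h = F g' h' := by
    intro g g' h h' hg hh
    obtain ⟨a, ha⟩ := Subgroup.mem_zpowers_iff.mp (QuotientGroup.eq.mp hg)
    obtain ⟨b, hb⟩ := Subgroup.mem_zpowers_iff.mp (QuotientGroup.eq.mp hh)
    have hg' : g' = g * z ^ a := by rw [ha, ← mul_assoc, mul_inv_cancel, one_mul]
    have hh' : h' = h * z ^ b := by rw [hb, ← mul_assoc, mul_inv_cancel, one_mul]
    have e1 : bar g = bar g' := bar_coset g g' ⟨a, hg'⟩
    have e2 : bar h = bar h' := bar_coset h h' ⟨b, hh'⟩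
    have e3 : bar (g * h) = bar (g' * h') := by
      refine bar_coset _ _ ⟨a + b, ?_⟩
      rw [hg', hh', mulz]
    apply zuniq _ _ (bar (g * h))
    rw [← hF g h, e1, e2, e3, hF g' h']
  set Q := G ⧸ Subgroup.zpowers z with hQ
  refine ⟨fun q r => F q.out r.out, ?_, ?_, ?_, ?_, ?_⟩
  · intro g h
    dsimp only
    have hr : F (QuotientGroup.mk g : Q).out (QuotientGroup.mk h : Q).out = F g h :=
      Fcongr _ _ _ _ (QuotientGroup.out_eq' _) (QuotientGroup.out_eq' _)
    rw [hr]
    exact hF g h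
  -- values in {0,1}
  · intro q r
    dsimp only
    set g := q.out
    set h := r.out
    have h1 : z ^ (F g h) ≤ bar g * bar h := by
      calc z ^ (F g h) = z ^ (F g h) * 1 := (mul_one _).symm
        _ ≤ z ^ (F g h) * bar (g * h) := mul_le_mul_right (hbar_min _).1 _
        _ = bar g * bar h := (hF g h).symm
    have h2 : bar g * bar h < z ^ (F g h + 1) := by
      calc bar g * bar h = z ^ (F g h) * bar (g * h) := hF g h
        _ < z ^ (F g h) * z := mul_lt_mul_right (hbar_min _).2 _
        _ = z ^ (F g h + 1) := by rw [zpow_add, zpow_one]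
    have h3 : (1 : G) ≤ bar g * bar h := by
      calc (1 : G) ≤ bar g := (hbar_min g).1
        _ = bar g * 1 := (mul_one _).symm
        _ ≤ bar g * bar h := mul_le_mul_right (hbar_min h).1 _
    have h4 : bar g * bar h < z ^ (2 : ℤ) := by
      calc bar g * bar h < bar g * z := mul_lt_mul_right (hbar_min h).2 _
        _ = z * bar g := (hz_central _).symm
        _ < z * z := mul_lt_mul_right (hbar_min g).2 _
        _ = z ^ (2 : ℤ) := (zpow_two z).symm
    have hle : F g h < 2 := zmono.lt_iff_lt.mp (lt_of_le_of_lt h1 h4)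
    have hge : (0 : ℤ) < F g h + 1 := by
      have h5 : z ^ (0 : ℤ) < z ^ (F g h + 1) := by
        rw [zpow_zero]; exact lt_of_le_of_lt h3 h2
      exact zmono.lt_iff_lt.mp h5
    omega
  -- normalization
  · have F1g : ∀ g : G, F 1 g = 0 := by
      intro g
      apply zuniq _ _ (bar g)
      have h0 := hF 1 g
      rw [bar_one, one_mul, one_mul] at h0
      rw [← h0, zpow_zero, one_mul]
    have Fg1 : ∀ g : G, F g 1 = 0 := by
      intro g
      apply zuniq _ _ (bar g)
      have h0 := hF g 1
      rw [bar_one, mul_one, mul_one] at h0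
      rw [← h0, zpow_zero, one_mul]
    intro q
    constructor
    · dsimp only
      have hr : F (1 : Q).out q.out = F 1 q.out := by
        refine Fcongr _ _ _ _ ?_ rfl
        rw [QuotientGroup.out_eq', QuotientGroup.mk_one]
      rw [hr, F1g]
    · dsimp only
      have hr : F q.out (1 : Q).out = F q.out 1 := by
        refine Fcongr _ _ _ _ rfl ?_
        rw [QuotientGroup.out_eq', QuotientGroup.mk_one]
      rw [hr, Fg1]
  -- f g g⁻¹ = 1 for g ≠ 1
  · intro q hq
    dsimp only
    set g := q.out with hg
    have hq' : (QuotientGroup.mk g : Q) = q := QuotientGroup.out_eq' q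
    have hinvmk : ((g⁻¹ : G) : Q) = q⁻¹ := by
      rw [QuotientGroup.mk_inv, hq']
    have hred : F q.out q⁻¹.out = F g g⁻¹ := by
      refine Fcongr _ _ _ _ rfl ?_
      rw [QuotientGroup.out_eq', ← hinvmk]
    rw [hred]
    -- bar g ≠ 1
    have hbarg : 1 < bar g := by
      rcases lt_or_eq_of_le (hbar_min g).1 with h | h
      · exact h
      · exfalso
        obtain ⟨a, ha⟩ := hbar_coset g
        have hg1 : g = z ^ (-a) := by
          have h1 : g * z ^ a = 1 := by rw [← ha, ← h]
          rw [zpow_neg]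
          exact mul_eq_one_iff_eq_inv.mp h1
        apply hq
        rw [← hq', QuotientGroup.eq_one_iff, hg1]
        exact Subgroup.mem_zpowers_iff.mpr ⟨-a, rfl⟩
    -- bar (g⁻¹) = z * (bar g)⁻¹
    have hbarinv : bar g⁻¹ = z * (bar g)⁻¹ := by
      obtain ⟨a, ha⟩ := hbar_coset g
      obtain ⟨b, hb⟩ := hbar_coset g⁻¹
      symm
      refine bar_unique _ _ ?_ ?_ ?_ (hbar_min g⁻¹).1 (hbar_min g⁻¹).2
      · refine ⟨a + b - 1, ?_⟩
        rw [ha, hb, mul_inv_rev, ← zpow_neg, comm g⁻¹ (-a), ← mul_assoc, hz_central g⁻¹,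
          mul_assoc g⁻¹, ← zpow_one_add, mul_assoc g⁻¹, ← zpow_add,
          show (1 : ℤ) + -a + (a + b - 1) = b from by omega]
      · have h2 : (1 : G) < (bar g)⁻¹ * z := by
          have := mul_lt_mul_right (hbar_min g).2 (bar g)⁻¹
          simpa using this
        rw [← hz_central (bar g)⁻¹] at h2
        exact le_of_lt h2
      · have hinv : (bar g)⁻¹ < 1 := by
          have := mul_lt_mul_right hbarg (bar g)⁻¹
          simpa using this
        have := mul_lt_mul_right hinv z
        rwa [mul_one] at this
    apply zuniq _ _ (bar (g * g⁻¹))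
    rw [← hF g g⁻¹, hbarinv, hz_central (bar g)⁻¹, ← mul_assoc, mul_inv_cancel, one_mul,
      mul_inv_cancel, bar_one, zpow_one, mul_one]
  -- cocycle identity
  · intro q r s
    dsimp only
    set g := q.out
    set h := r.out
    set k := s.out
    have hmul1 : ((g * h : G) : Q) = q * r := by
      rw [QuotientGroup.mk_mul, QuotientGroup.out_eq', QuotientGroup.out_eq']
    have hmul2 : ((h * k : G) : Q) = r * s := by
      rw [QuotientGroup.mk_mul, QuotientGroup.out_eq', QuotientGroup.out_eq']
    have e1 : F (q * r).out k = F (g * h) k :=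
      Fcongr _ _ _ _ (by rw [QuotientGroup.out_eq', ← hmul1]) rfl
    have e2 : F g (r * s).out = F g (h * k) :=
      Fcongr _ _ _ _ rfl (by rw [QuotientGroup.out_eq', ← hmul2])
    rw [e1, e2]
    have key : z ^ (F g h + F (g * h) k) * bar (g * h * k)
        = z ^ (F h k + F g (h * k)) * bar (g * h * k) := by
      have lhs : bar g * bar h * bar k = z ^ (F g h + F (g * h) k) * bar (g * h * k) := by
        rw [hF g h, mul_assoc, hF (g * h) k, ← mul_assoc, ← zpow_add]
      have rhs : bar g * bar h * bar k = z ^ (F h k + F g (h * k)) * bar (g * h * k) := by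
        rw [mul_assoc, hF h k, ← mul_assoc, ← comm (bar g) (F h k), mul_assoc, hF g (h * k),
          ← mul_assoc, ← zpow_add, ← mul_assoc g h k]
      rw [← lhs, rhs]
    have := zuniq _ _ _ key
    omega
end

section
/- Every finite circularly-orderable group is cyclic. -/
/-- Every finite circularly-orderable group is cyclic. -/
theorem isCyclic_of_finite_circularlyOrderable {G : Type*} [Group G] [Finite G]
    (h : CircularlyOrderable G) : IsCyclic G := by
  classical
  obtain ⟨f, h01, hid, hinv, hcoc⟩ := h
  have : Fintype G := Fintype.ofFinite G
  set n : ℕ := Fintype.card G with hn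
  have hnpos : 0 < n := Fintype.card_pos
  set σ : G → ℤ := fun g => ∑ k : G, f g k with hσ
  -- the key identity: σ g + σ h - σ (g*h) = n * f g h
  have key : ∀ g h : G, σ h - σ (g * h) + σ g - (n : ℤ) * f g h = 0 := by
    intro g h
    have hsum : ∑ k : G, (f h k - f (g * h) k + f g (h * k) - f g h) = 0 :=
      Finset.sum_eq_zero fun k _ => hcoc g h k
    have hre : ∑ k : G, f g (h * k) = σ g := by
      rw [hσ]
      exact Fintype.sum_equiv (Equiv.mulLeft h) _ _ (fun k => rfl)
    simp only [Finset.sum_sub_distrib, Finset.sum_add_distrib, hre] at hsum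
    simp only [Finset.sum_const, Finset.card_univ, nsmul_eq_mul] at hsum
    rw [hσ] at hsum ⊢
    push_cast at hsum ⊢
    linarith
  -- σ g = 0 iff g = 1, and 0 ≤ σ g < n
  have hσnonneg : ∀ g : G, 0 ≤ σ g := fun g =>
    Finset.sum_nonneg fun k _ => by rcases h01 g k with h' | h' <;> omega
  have hσlt : ∀ g : G, σ g < n := by
    intro g
    have : σ g < ∑ _k : G, (1 : ℤ) := by
      apply Finset.sum_lt_sum (fun k _ => by rcases h01 g k with h' | h' <;> omega)
      exact ⟨1, Finset.mem_univ 1, by rw [(hid g).2]; norm_num⟩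
    simpa using this
  have hσone : σ 1 = 0 := Finset.sum_eq_zero fun k _ => (hid k).1
  have hσzero : ∀ g : G, σ g = 0 → g = 1 := by
    intro g hg
    by_contra hne
    have hall := (Finset.sum_eq_zero_iff_of_nonneg
      (fun k _ => by rcases h01 g k with h' | h' <;> omega)).mp hg g⁻¹ (Finset.mem_univ _)
    rw [hinv g hne] at hall
    exact one_ne_zero hall
  -- the homomorphism into ZMod n
  let φ : G →* Multiplicative (ZMod n) :=
    { toFun := fun g => Multiplicative.ofAdd ((σ g : ZMod n))
      map_one' := by simp [hσone]
      map_mul' := by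
        intro g h
        have := key g h
        have : (σ (g * h) : ZMod n) = (σ g : ZMod n) + (σ h : ZMod n) := by
          have hd : ((n : ℤ)) ∣ (σ g + σ h - σ (g * h)) := ⟨f g h, by linarith⟩
          have : ((σ g + σ h - σ (g * h) : ℤ) : ZMod n) = 0 :=
            (ZMod.intCast_zmod_eq_zero_iff_dvd _ _).mpr hd
          push_cast at this
          linear_combination -this
        simp only [← ofAdd_add, this] }
  have hinj : Function.Injective φ := by
    rw [injective_iff_map_eq_one]
    intro g hg
    have : ((σ g : ℤ) : ZMod n) = 0 := by
      simpa [φ] using hg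
    have hd : ((n : ℤ)) ∣ σ g := (ZMod.intCast_zmod_eq_zero_iff_dvd _ _).mp this
    obtain ⟨c, hc⟩ := hd
    have h0 := hσnonneg g
    have h1 := hσlt g
    have hc0 : c = 0 := by
      rcases lt_trichotomy c 0 with h' | h' | h'
      · nlinarith
      · exact h'
      · nlinarith
    exact hσzero g (by rw [hc, hc0, mul_zero])
  have : IsCyclic (φ.range) := inferInstance
  exact isCyclic_of_surjective (MonoidHom.ofInjective hinj).symm
    (MonoidHom.ofInjective hinj).symm.surjective
end

section
/- Let G be a circularly-orderable group and let K be a normal subgroup of G that is finite and cyclic. Then K is central in G. -/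
/-- The central extension of `G` by `ℤ` determined by the 2-cocycle `f`. -/
@[ext]
structure CircExt (G : Type*) [Group G] (f : G → G → ℤ) where
  g : G
  m : ℤ

namespace CircExt

variable {G : Type*} [Group G] {f : G → G → ℤ}

instance : Mul (CircExt G f) := ⟨fun a b => ⟨a.g * b.g, a.m + b.m + f a.g b.g⟩⟩
instance : One (CircExt G f) := ⟨⟨1, 0⟩⟩
instance : Inv (CircExt G f) := ⟨fun a => ⟨a.g⁻¹, -a.m - f a.g a.g⁻¹⟩⟩

@[simp] lemma mul_g (a b : CircExt G f) : (a * b).g = a.g * b.g := rfl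
@[simp] lemma mul_m (a b : CircExt G f) : (a * b).m = a.m + b.m + f a.g b.g := rfl
@[simp] lemma one_g : (1 : CircExt G f).g = 1 := rfl
@[simp] lemma one_m : (1 : CircExt G f).m = 0 := rfl
@[simp] lemma inv_g (a : CircExt G f) : (a⁻¹).g = a.g⁻¹ := rfl
@[simp] lemma inv_m (a : CircExt G f) : (a⁻¹).m = -a.m - f a.g a.g⁻¹ := rfl

section withFact

variable [hF : Fact (IsCircularOrdering f)]

lemma f_one_left (g : G) : f 1 g = 0 := (hF.out.2.1 g).1
lemma f_one_right (g : G) : f g 1 = 0 := (hF.out.2.1 g).2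

lemma f_inv_symm (g : G) : f g⁻¹ g = f g g⁻¹ := by
  rcases eq_or_ne g 1 with rfl | hg
  · simp [f_one_left]
  · have h1 : f g g⁻¹ = 1 := hF.out.2.2.1 g hg
    have h2 : f g⁻¹ (g⁻¹)⁻¹ = 1 := hF.out.2.2.1 g⁻¹ (by simpa using hg)
    rw [inv_inv] at h2
    rw [h1, h2]

lemma f_nonneg (g h : G) : 0 ≤ f g h := by
  rcases hF.out.1 g h with h' | h' <;> omega

lemma f_le_one (g h : G) : f g h ≤ 1 := by
  rcases hF.out.1 g h with h' | h' <;> omega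

instance : Group (CircExt G f) where
  mul_assoc a b c := by
    have := hF.out.2.2.2 a.g b.g c.g
    ext <;> simp [mul_assoc] <;> omega
  one_mul a := by ext <;> simp [f_one_left]
  mul_one a := by ext <;> simp [f_one_right]
  inv_mul_cancel a := by
    ext <;> simp [f_inv_symm] <;> omega

/-- Projection to `G` as a group homomorphism. -/
def proj : CircExt G f →* G where
  toFun a := a.g
  map_one' := rfl
  map_mul' _ _ := rfl

@[simp] lemma proj_apply (a : CircExt G f) : proj a = a.g := rfl

/-- The central copy of `ℤ`. -/
def cen (s : ℤ) : CircExt G f := ⟨1, s⟩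

lemma cen_comm (s : ℤ) (a : CircExt G f) : cen s * a = a * cen s := by
  ext <;> simp [cen, f_one_left, f_one_right] <;> omega

/-- The positive cone. -/
def Pos (a : CircExt G f) : Prop := 1 ≤ a.m ∨ (a.m = 0 ∧ a.g ≠ 1)

lemma pos_ne_one {a : CircExt G f} (h : Pos a) : a ≠ 1 := by
  rintro rfl
  rcases h with h | h
  · simp at h
  · exact h.2 rfl

lemma pos_mul {a b : CircExt G f} (ha : Pos a) (hb : Pos b) : Pos (a * b) := by
  have hnn := f_nonneg (f := f) a.g b.g
  rcases ha with ha | ha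
  · left
    have : 0 ≤ b.m := by rcases hb with hb | hb <;> omega
    simp only [mul_m]; omega
  · rcases hb with hb | hb
    · left; simp only [mul_m]; omega
    · rcases hF.out.1 a.g b.g with hf0 | hf1
      · right
        constructor
        · simp only [mul_m]; omega
        · simp only [mul_g]
          intro hcon
          have : b.g = a.g⁻¹ := eq_inv_of_mul_eq_one_right hcon
          rw [this] at hf0
          rw [hF.out.2.2.1 a.g ha.2] at hf0
          omega
      · left; simp only [mul_m]; omega

lemma pos_self_or_inv {a : CircExt G f} (h : a ≠ 1) : Pos a ∨ Pos a⁻¹ := by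
  rcases lt_trichotomy a.m 0 with hm | hm | hm
  · right
    rcases eq_or_ne a.g 1 with hg | hg
    · left
      have : f a.g a.g⁻¹ = 0 := by rw [hg]; simpa using f_one_left (f := f) 1
      simp only [inv_m, this]; omega
    · have h1 : f a.g a.g⁻¹ = 1 := hF.out.2.2.1 a.g hg
      rcases eq_or_lt_of_le (by omega : a.m ≤ -1) with he | hlt
      · right
        refine ⟨by simp only [CircExt.inv_m, h1]; omega, by simpa using hg⟩
      · left; simp only [inv_m, h1]; omega
  · rcases eq_or_ne a.g 1 with hg | hg
    · exact absurd (CircExt.ext hg hm) h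
    · exact Or.inl (Or.inr ⟨hm, hg⟩)
  · exact Or.inl (Or.inl hm)

lemma pos_pow {a : CircExt G f} (ha : Pos a) : ∀ n : ℕ, Pos (a ^ (n + 1))
  | 0 => by simpa using ha
  | n + 1 => by
    rw [pow_succ]
    exact pos_mul (pos_pow ha n) ha

lemma eq_one_of_pow_eq_one {a : CircExt G f} {n : ℕ} (hn : n ≠ 0) (h : a ^ n = 1) :
    a = 1 := by
  by_contra hne
  obtain ⟨m, rfl⟩ := Nat.exists_eq_succ_of_ne_zero hn
  rcases pos_self_or_inv hne with hp | hp
  · exact pos_ne_one (pos_pow hp m) h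
  · refine pos_ne_one (pos_pow hp m) ?_
    rw [inv_pow, h, inv_one]

end withFact

end CircExt

/-- In a circularly-orderable group, every normal finite cyclic subgroup is central. -/
theorem normal_finite_cyclic_subgroup_central {G : Type*} [Group G]
    (h : CircularlyOrderable G) (K : Subgroup G) [K.Normal]
    (hfin : Finite K) (hcyc : IsCyclic K) :
    K ≤ Subgroup.center G := by
  obtain ⟨f, hf⟩ := h
  haveI : Fact (IsCircularOrdering f) := ⟨hf⟩
  intro k hk
  rw [Subgroup.mem_center_iff]
  intro g
  -- it suffices to show `g * k * g⁻¹ = k`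
  suffices hconj : g * k * g⁻¹ = k by
    calc g * k = (g * k * g⁻¹) * g := by group
    _ = k * g := by rw [hconj]
  obtain ⟨t, ht⟩ := hcyc
  -- decomposition of elements of the preimage of K
  set w : CircExt G f := ⟨(t : G), 0⟩ with hw
  have hwg : ∀ i : ℤ, (w ^ i).g = (t : G) ^ i := fun i => by
    have := map_zpow (CircExt.proj (f := f)) w i
    simpa using this
  have decomp : ∀ a : CircExt G f, a.g ∈ K → ∃ (s : ℤ) (i : ℤ), a = CircExt.cen s * w ^ i := by
    intro a ha
    obtain ⟨i, hi⟩ := Subgroup.mem_zpowers_iff.1 (ht ⟨a.g, ha⟩)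
    refine ⟨a.m - (w ^ i).m, i, ?_⟩
    have hg : (t : G) ^ i = a.g := by
      have := congrArg (Subtype.val) hi
      simpa using this
    ext
    · simp [CircExt.cen, hwg i, hg]
    · simp [CircExt.cen, CircExt.f_one_left]
  have comm : ∀ a b : CircExt G f, a.g ∈ K → b.g ∈ K → Commute a b := by
    intro a b ha hb
    obtain ⟨s, i, rfl⟩ := decomp a ha
    obtain ⟨s', j, rfl⟩ := decomp b hb
    have hc : ∀ (u : ℤ) (x : CircExt G f), Commute (CircExt.cen u) x := fun u x =>
      CircExt.cen_comm u x
    have hww : Commute (w ^ i) (w ^ j) := Commute.zpow_zpow_self w i j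
    have h1 : Commute (w ^ i) (CircExt.cen s' * w ^ j) :=
      ((hc s' (w ^ i)).symm).mul_right hww
    exact (hc s (CircExt.cen s' * w ^ j)).mul_left h1
  -- main argument
  set n := Nat.card K with hn
  have hn0 : n ≠ 0 := Nat.card_ne_zero.2 ⟨⟨⟨1, K.one_mem⟩⟩, hfin⟩
  have hkn : k ^ n = 1 := by
    have : (⟨k, hk⟩ : K) ^ n = 1 := pow_card_eq_one'
    have := congrArg Subtype.val this
    simpa using this
  set x : CircExt G f := ⟨g, 0⟩ with hx
  set y : CircExt G f := ⟨k, 0⟩ with hy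
  set c : CircExt G f := x * y * x⁻¹ with hc
  have hcg : c.g = g * k * g⁻¹ := by simp [hc, hx, hy]
  have hcK : c.g ∈ K := by rw [hcg]; exact Subgroup.Normal.conj_mem ‹K.Normal› k hk g
  have hyK : y.g ∈ K := hk
  have hyn : y ^ n = CircExt.cen ((y ^ n).m) := by
    have hg1 : (y ^ n).g = 1 := by
      have := map_pow (CircExt.proj (f := f)) y n
      simp only [CircExt.proj_apply] at this
      rw [this]
      exact hkn
    ext
    · simpa [CircExt.cen] using hg1
    · rfl
  have hcn : c ^ n = y ^ n := by
    rw [hc, conj_pow, hyn]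
    rw [← CircExt.cen_comm ((y ^ n).m) x, mul_assoc, mul_inv_cancel, mul_one]
  have hcy : Commute c y := comm c y hcK hyK
  have hpow : (c * y⁻¹) ^ n = 1 := by
    rw [(hcy.inv_right).mul_pow, hcn, inv_pow, mul_inv_cancel]
  have : c * y⁻¹ = 1 := CircExt.eq_one_of_pow_eq_one hn0 hpow
  have hcyeq : c = y := by
    rw [← mul_one c, ← inv_mul_cancel y, ← mul_assoc, this, one_mul]
  have := congrArg CircExt.g hcyeq
  rw [hcg, hy] at this
  exact this
end

section
/- Let G be a group with an inhomogeneous circular ordering f, and let n ≥ 2. Then the set (ℤ/nℤ) × G with group operation (a,g)(b,h) = (a + b + [f(g,h)], gh), where [·] : ℤ → ℤ/nℤ is reduction mod n, is a circularly-orderable group. -/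
/-- If `(G,f)` is a circularly-ordered group and `n ≥ 2`, then `(ℤ/nℤ) × G` with the
group operation `(a,g)(b,h) = (a + b + [f(g,h)], gh)` (the central extension of `G` by
`ℤ/nℤ` associated to the mod-`n` reduction of `f`) is a circularly-orderable group. -/
theorem finite_central_extension_circularlyOrderable {G : Type*} [Group G]
    (f : G → G → ℤ) (hf : IsCircularOrdering f) (n : ℕ) (hn : 2 ≤ n)
    (mul : ZMod n × G → ZMod n × G → ZMod n × G)
    (hmul : ∀ x y : ZMod n × G, mul x y = (x.1 + y.1 + (f x.2 y.2 : ZMod n), x.2 * y.2)) :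
    ∃ inv : ZMod n × G → ZMod n × G,
      -- `ZMod n × G` with this operation is a group with identity `(0,1)`
      (∀ x y z : ZMod n × G, mul (mul x y) z = mul x (mul y z)) ∧
      (∀ x : ZMod n × G, mul ((0 : ZMod n), (1 : G)) x = x) ∧
      (∀ x : ZMod n × G, mul x ((0 : ZMod n), (1 : G)) = x) ∧
      (∀ x : ZMod n × G, mul (inv x) x = ((0 : ZMod n), (1 : G))) ∧
      (∀ x : ZMod n × G, mul x (inv x) = ((0 : ZMod n), (1 : G))) ∧
      -- and this group admits a circular ordering
      (∃ F : ZMod n × G → ZMod n × G → ℤ,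
        (∀ x y : ZMod n × G, F x y = 0 ∨ F x y = 1) ∧
        (∀ x : ZMod n × G, F ((0 : ZMod n), (1 : G)) x = 0 ∧ F x ((0 : ZMod n), (1 : G)) = 0) ∧
        (∀ x : ZMod n × G, x ≠ ((0 : ZMod n), (1 : G)) → F x (inv x) = 1) ∧
        (∀ x y z : ZMod n × G, F y z - F (mul x y) z + F x (mul y z) - F x y = 0)) := by
  
  haveI : NeZero n := ⟨by omega⟩
  obtain ⟨hf01, hfid, hfinv, hfcoc⟩ := hf
  have hn0 : (0:ℤ) < (n:ℤ) := by exact_mod_cast (by omega : 0 < n)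
  have hfge0 : ∀ g h : G, 0 ≤ f g h := by
    intro g h; rcases hf01 g h with h' | h' <;> omega
  have hsymm : ∀ g : G, f g⁻¹ g = f g g⁻¹ := by
    intro g
    by_cases hg : g = 1
    · subst hg; rw [inv_one]
    · rw [hfinv g hg]
      have := hfinv g⁻¹ (inv_ne_one.mpr hg)
      rwa [inv_inv] at this
  have hcocZ : ∀ g h k : G,
      (f h k : ZMod n) - f (g * h) k + f g (h * k) - f g h = 0 := by
    intro g h k
    have := hfcoc g h k
    exact_mod_cast congrArg (fun t : ℤ => (t : ZMod n)) this
  -- the key computation for the carry cocycle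
  have key : ∀ x y : ZMod n × G,
      (n:ℤ) * (if (n:ℤ) ≤ (x.1.val : ℤ) + y.1.val + f x.2 y.2 then (1:ℤ) else 0) =
      (x.1.val : ℤ) + y.1.val + f x.2 y.2
        - ((x.1 + y.1 + (f x.2 y.2 : ZMod n)).val : ℤ) := by
    intro x y
    set A : ℤ := (x.1.val : ℤ) + y.1.val + f x.2 y.2 with hA
    set B : ℤ := ((x.1 + y.1 + (f x.2 y.2 : ZMod n)).val : ℤ) with hB
    have hdvd : (n:ℤ) ∣ A - B := by
      have hz : ((A - B : ℤ) : ZMod n) = 0 := by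
        rw [hA, hB]
        push_cast [ZMod.natCast_val, ZMod.cast_id]
        ring
      exact (ZMod.intCast_zmod_eq_zero_iff_dvd _ _).mp hz
    have hxv : (x.1.val : ℤ) < n := by exact_mod_cast x.1.val_lt
    have hyv : (y.1.val : ℤ) < n := by exact_mod_cast y.1.val_lt
    have hBlt : B < n := by
      rw [hB]; exact_mod_cast (x.1 + y.1 + (f x.2 y.2 : ZMod n)).val_lt
    have hB0 : 0 ≤ B := by rw [hB]; positivity
    have hx0 : (0:ℤ) ≤ (x.1.val : ℤ) := by positivity
    have hy0 : (0:ℤ) ≤ (y.1.val : ℤ) := by positivity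
    have hf' := hf01 x.2 y.2
    have hA0 : 0 ≤ A := by
      rw [hA]
      have := hfge0 x.2 y.2
      omega
    have hAlt : A < 2 * n := by rw [hA]; omega
    obtain ⟨k, hk⟩ := hdvd
    have hk0 : 0 ≤ k := by
      by_contra hc
      push_neg at hc
      have hk1 : k ≤ -1 := by omega
      have : (n:ℤ) * k ≤ (n:ℤ) * (-1) := by
        exact mul_le_mul_of_nonneg_left hk1 (le_of_lt hn0)
      linarith
    have hk1 : k ≤ 1 := by
      by_contra hc
      push_neg at hc
      have hk2 : (2:ℤ) ≤ k := by omega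
      have : (n:ℤ) * 2 ≤ (n:ℤ) * k := by
        exact mul_le_mul_of_nonneg_left hk2 (le_of_lt hn0)
      linarith
    interval_cases k
    · rw [if_neg (by omega)]
      omega
    · rw [if_pos (by omega)]
      omega
  refine ⟨fun x => (-x.1 - (f x.2 x.2⁻¹ : ZMod n), x.2⁻¹), ?_, ?_, ?_, ?_, ?_, ?_⟩
  · -- associativity
    intro x y z
    rw [hmul, hmul, hmul, hmul]
    refine Prod.ext ?_ ?_
    · dsimp only
      have := hcocZ x.2 y.2 z.2
      linear_combination -this
    · dsimp only; rw [mul_assoc]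
  · intro x
    rw [hmul]
    refine Prod.ext ?_ ?_
    · dsimp only; rw [(hfid x.2).1]; push_cast; ring
    · dsimp only; rw [one_mul]
  · intro x
    rw [hmul]
    refine Prod.ext ?_ ?_
    · dsimp only; rw [(hfid x.2).2]; push_cast; ring
    · dsimp only; rw [mul_one]
  · intro x
    rw [hmul]
    refine Prod.ext ?_ ?_
    · dsimp only; rw [hsymm x.2]; ring
    · dsimp only; rw [inv_mul_cancel]
  · intro x
    rw [hmul]
    refine Prod.ext ?_ ?_
    · dsimp only; ring
    · dsimp only; rw [mul_inv_cancel]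
  · -- the circular ordering
    refine ⟨fun x y => if (n:ℤ) ≤ (x.1.val : ℤ) + y.1.val + f x.2 y.2 then 1 else 0,
      ?_, ?_, ?_, ?_⟩
    · -- values in {0,1}
      intro x y
      dsimp only
      split_ifs
      · right; rfl
      · left; rfl
    · -- identity rows/columns vanish
      intro x
      have hxv : (x.1.val : ℤ) < n := by exact_mod_cast x.1.val_lt
      constructor
      · dsimp only
        rw [if_neg]
        rw [ZMod.val_zero, (hfid x.2).1]
        push_cast
        omega
      · dsimp only
        rw [if_neg]
        rw [ZMod.val_zero, (hfid x.2).2]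
        push_cast
        omega
    · -- the inverse condition
      intro x hx
      dsimp only
      have hk := key x (-x.1 - (f x.2 x.2⁻¹ : ZMod n), x.2⁻¹)
      dsimp only at hk
      have hz : x.1 + (-x.1 - (f x.2 x.2⁻¹ : ZMod n)) + (f x.2 x.2⁻¹ : ZMod n) = 0 := by
        ring
      rw [hz, ZMod.val_zero] at hk
      have hApos : (0:ℤ) < (x.1.val : ℤ)
          + ((-x.1 - (f x.2 x.2⁻¹ : ZMod n)).val : ℤ) + f x.2 x.2⁻¹ := by
        by_cases hg : x.2 = 1
        · have hx1 : x.1 ≠ 0 := by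
            intro h0
            exact hx (Prod.ext h0 hg)
          have hv0 : x.1.val ≠ 0 := fun h => hx1 ((ZMod.val_eq_zero x.1).mp h)
          have h1 : (1:ℤ) ≤ (x.1.val : ℤ) := by
            exact_mod_cast Nat.one_le_iff_ne_zero.mpr hv0
          have h2 : (0:ℤ) ≤ ((-x.1 - (f x.2 x.2⁻¹ : ZMod n)).val : ℤ) := by positivity
          have h3 := hfge0 x.2 x.2⁻¹
          omega
        · have h1 := hfinv x.2 hg
          have h2 : (0:ℤ) ≤ (x.1.val : ℤ) := by positivity
          have h3 : (0:ℤ) ≤ ((-x.1 - (f x.2 x.2⁻¹ : ZMod n)).val : ℤ) := by positivity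
          omega
      split_ifs at hk ⊢ with h
      · rfl
      · exfalso; omega
    · -- the cocycle condition
      intro x y z
      rw [hmul x y, hmul y z]
      dsimp only
      have k1 := key y z
      have k2 := key ((x.1 + y.1 + (f x.2 y.2 : ZMod n), x.2 * y.2)) z
      have k3 := key x ((y.1 + z.1 + (f y.2 z.2 : ZMod n), y.2 * z.2))
      have k4 := key x y
      dsimp only at k1 k2 k3 k4
      have hvv : ((x.1 + y.1 + (f x.2 y.2 : ZMod n)) + z.1 + (f (x.2*y.2) z.2 : ZMod n)).val
          = (x.1 + (y.1 + z.1 + (f y.2 z.2 : ZMod n)) + (f x.2 (y.2*z.2) : ZMod n)).val := by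
        congr 1
        have := hcocZ x.2 y.2 z.2
        linear_combination -this
      have hvv' : (((x.1 + y.1 + (f x.2 y.2 : ZMod n)) + z.1
            + (f (x.2*y.2) z.2 : ZMod n)).val : ℤ)
          = ((x.1 + (y.1 + z.1 + (f y.2 z.2 : ZMod n))
            + (f x.2 (y.2*z.2) : ZMod n)).val : ℤ) := by
        exact_mod_cast hvv
      have hc := hfcoc x.2 y.2 z.2
      have hmain : (n:ℤ) *
          ((if (n:ℤ) ≤ (y.1.val : ℤ) + z.1.val + f y.2 z.2 then (1:ℤ) else 0)
           - (if (n:ℤ) ≤ (((x.1 + y.1 + (f x.2 y.2 : ZMod n)).val : ℤ)) + z.1.val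
                + f (x.2*y.2) z.2 then (1:ℤ) else 0)
           + (if (n:ℤ) ≤ (x.1.val : ℤ) + ((y.1 + z.1 + (f y.2 z.2 : ZMod n)).val : ℤ)
                + f x.2 (y.2*z.2) then (1:ℤ) else 0)
           - (if (n:ℤ) ≤ (x.1.val : ℤ) + y.1.val + f x.2 y.2 then (1:ℤ) else 0)) = 0 := by
        linear_combination k1 - k2 + k3 - k4 + hc + hvv'
      have hne : (n:ℤ) ≠ 0 := ne_of_gt hn0
      rcases mul_eq_zero.mp hmain with h | h
      · exact absurd h hne
      · exact h
end

section
/- Suppose G is a circularly-orderable group and K is a normal subgroup of G that is finite and cyclic. Then the quotient group G/K is circularly-orderable. -/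
namespace CircQuot


variable {G : Type*} [Group G]

section Cocycle

variable {f : G → G → ℤ}

lemma f01 (hf : IsCircularOrdering f) (g h : G) : f g h = 0 ∨ f g h = 1 := hf.1 g h

lemma f_one_left (hf : IsCircularOrdering f) (g : G) : f 1 g = 0 := (hf.2.1 g).1

lemma f_one_right (hf : IsCircularOrdering f) (g : G) : f g 1 = 0 := (hf.2.1 g).2

lemma f_inv (hf : IsCircularOrdering f) {g : G} (hg : g ≠ 1) : f g g⁻¹ = 1 := hf.2.2.1 g hg

lemma fcoc (hf : IsCircularOrdering f) (g h k : G) :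
    f h k - f (g * h) k + f g (h * k) - f g h = 0 := hf.2.2.2 g h k

lemma f_inv_comm (hf : IsCircularOrdering f) (g : G) : f g⁻¹ g = f g g⁻¹ := by
  have h := fcoc hf g g⁻¹ g
  rw [mul_inv_cancel, inv_mul_cancel, f_one_left hf, f_one_right hf] at h
  omega

lemma f_inv' (hf : IsCircularOrdering f) {g : G} (hg : g ≠ 1) : f g⁻¹ g = 1 := by
  rw [f_inv_comm hf]; exact f_inv hf hg

lemma fI1 (hf : IsCircularOrdering f) {g : G} (hg : g ≠ 1) (h : G) :
    f g (g⁻¹ * h) = 1 - f g⁻¹ h := by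
  have hc := fcoc hf g g⁻¹ h
  rw [mul_inv_cancel, f_one_left hf, f_inv hf hg] at hc
  omega

lemma fasym (hf : IsCircularOrdering f) {g h : G} (hg : g ≠ 1) (hh : h ≠ 1) (hgh : g ≠ h) :
    f h⁻¹ g = 1 - f g⁻¹ h := by
  have hc := fcoc hf h⁻¹ g (g⁻¹ * h)
  rw [mul_inv_cancel_left] at hc
  have h2 : (h⁻¹ * g) * (g⁻¹ * h) = 1 := by group
  have h3 : g⁻¹ * h = (h⁻¹ * g)⁻¹ := by group
  rw [h3, f_inv hf (by
    intro hh1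
    exact hgh (by rw [inv_mul_eq_one] at hh1; exact hh1.symm)), ← h3] at hc
  rw [f_inv' hf hh] at hc
  rw [fI1 hf hg h] at hc
  omega

/-- The linear order on `G` obtained by cutting the circular order at `1`. -/
def clt (f : G → G → ℤ) (g h : G) : Prop := g ≠ h ∧ (g = 1 ∨ f g⁻¹ h = 1)

lemma clt_irrefl (g : G) : ¬ clt f g g := fun h => h.1 rfl

lemma clt_ne {g h : G} (h1 : clt f g h) : g ≠ h := h1.1

lemma not_clt_one (hf : IsCircularOrdering f) (g : G) : ¬ clt f g 1 := by
  rintro ⟨hne, h1 | h1⟩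
  · exact hne h1
  · rw [f_one_right hf] at h1; omega

lemma clt_one_left {h : G} (hh : h ≠ 1) : clt f 1 h := ⟨Ne.symm hh, Or.inl rfl⟩

lemma clt_of_f {g h : G} (hg : g ≠ 1) (hgh : g ≠ h) (h1 : f g⁻¹ h = 1) : clt f g h :=
  ⟨hgh, Or.inr h1⟩

lemma clt_f (hf : IsCircularOrdering f) {g h : G} (hg : g ≠ 1) (hc : clt f g h) :
    f g⁻¹ h = 1 := by
  rcases hc.2 with h1 | h1
  · exact absurd h1 hg
  · exact h1

lemma clt_total (hf : IsCircularOrdering f) {g h : G} (hne : g ≠ h) :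
    clt f g h ∨ clt f h g := by
  by_cases hg : g = 1
  · exact Or.inl (by subst hg; exact clt_one_left (Ne.symm hne))
  by_cases hh : h = 1
  · exact Or.inr (by subst hh; exact clt_one_left hne)
  rcases f01 hf g⁻¹ h with h0 | h1
  · right
    refine clt_of_f hh (Ne.symm hne) ?_
    rw [fasym hf hg hh hne]; omega
  · exact Or.inl (clt_of_f hg hne h1)

lemma clt_asymm (hf : IsCircularOrdering f) {g h : G} (h1 : clt f g h) (h2 : clt f h g) :
    False := by
  by_cases hg : g = 1
  · subst hg; exact not_clt_one hf h h2
  by_cases hh : h = 1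
  · subst hh; exact not_clt_one hf g h1
  have e1 := clt_f hf hg h1
  have e2 := clt_f hf hh h2
  rw [fasym hf hg hh h1.1] at e2
  omega

lemma clt_trans (hf : IsCircularOrdering f) {g h k : G} (h1 : clt f g h) (h2 : clt f h k) :
    clt f g k := by
  by_cases hh : h = 1
  · subst hh; exact absurd h1 (not_clt_one hf g)
  by_cases hk : k = 1
  · subst hk; exact absurd h2 (not_clt_one hf h)
  by_cases hg : g = 1
  · subst hg; exact clt_one_left hk
  have e1 := clt_f hf hg h1
  have e2 := clt_f hf hh h2
  have hgk : g ≠ k := by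
    rintro rfl
    have := fasym hf hg hh h1.1
    omega
  have hc := fcoc hf g⁻¹ h (h⁻¹ * k)
  rw [mul_inv_cancel_left] at hc
  have hI : f h (h⁻¹ * k) = 0 := by rw [fI1 hf hh k]; omega
  have b1 := f01 hf (g⁻¹ * h) (h⁻¹ * k)
  have b2 := f01 hf g⁻¹ k
  exact clt_of_f hg hgk (by omega)

/-- Key left-compatibility of the cut order with the cocycle. -/
lemma clt_compat (hf : IsCircularOrdering f) {g h : G} (hgh : clt f g h) (k : G) :
    (f k g = 0 ∧ f k h = 1) ∨ (f k g = f k h ∧ clt f (k * g) (k * h)) := by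
  by_cases hk : k = 1
  · subst hk
    right
    rw [f_one_left hf, f_one_left hf, one_mul, one_mul]
    exact ⟨rfl, hgh⟩
  by_cases hg : g = 1
  · subst hg
    have hh : h ≠ 1 := Ne.symm hgh.1
    rw [f_one_right hf]
    rcases f01 hf k h with h0 | h1
    · right
      rw [h0, mul_one]
      refine ⟨rfl, ?_⟩
      have hkh : k ≠ k * h := by
        intro he; exact hh (by rwa [left_eq_mul] at he)
      refine clt_of_f hk hkh ?_
      have := fI1 hf (g := k⁻¹) (by simpa using hk) h
      simp only [inv_inv] at this
      omega
    · exact Or.inl ⟨rfl, h1⟩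
  have hh : h ≠ 1 := by
    intro he; subst he; exact not_clt_one hf g hgh
  have e1 := clt_f hf hg hgh
  have hc := fcoc hf k g (g⁻¹ * h)
  rw [mul_inv_cancel_left] at hc
  have hI : f g (g⁻¹ * h) = 0 := by rw [fI1 hf hg h]; omega
  rw [hI] at hc
  have b1 := f01 hf (k * g) (g⁻¹ * h)
  have b2 := f01 hf k g
  have b3 := f01 hf k h
  by_cases he : f k g = f k h
  · right
    refine ⟨he, ?_⟩
    have hne : k * g ≠ k * h := fun hh2 => hgh.1 (mul_left_cancel hh2)
    by_cases hkg : k * g = 1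
    · exact ⟨hne, Or.inl hkg⟩
    refine clt_of_f hkg hne ?_
    have := fI1 hf (g := k * g) hkg (k * h)
    have harr : (k * g)⁻¹ * (k * h) = g⁻¹ * h := by group
    rw [harr] at this
    omega
  · left
    omega

/-- `f k g = 1`, `f k h = 0` forces `k*g` below `k*h` in the cut order. -/
lemma clt_wrap (hf : IsCircularOrdering f) {k g h : G} (h1 : f k g = 1) (h0 : f k h = 0) :
    clt f (k * g) (k * h) := by
  have hk : k ≠ 1 := by rintro rfl; rw [f_one_left hf] at h1; omega
  have hg : g ≠ 1 := by rintro rfl; rw [f_one_right hf] at h1; omega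
  have hgh : g ≠ h := by rintro rfl; omega
  have hne : k * g ≠ k * h := fun hh2 => hgh (mul_left_cancel hh2)
  by_cases hkg : k * g = 1
  · exact ⟨hne, Or.inl hkg⟩
  have hc := fcoc hf k g (g⁻¹ * h)
  rw [mul_inv_cancel_left] at hc
  have b1 := f01 hf (k * g) (g⁻¹ * h)
  have b2 := f01 hf g (g⁻¹ * h)
  have hI := fI1 hf (g := k * g) hkg (k * h)
  have harr : (k * g)⁻¹ * (k * h) = g⁻¹ * h := by group
  rw [harr] at hI
  exact clt_of_f hkg hne (by omega)

end Cocycle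

section Ext

/-- The subtype of circular orderings. -/
def CO (G : Type*) [Group G] : Type _ := {f : G → G → ℤ // IsCircularOrdering f}
def Ext (G : Type*) [Group G] (_F : CO G) : Type _ := G × ℤ
variable {F : CO G}
instance : Group (Ext G F) where
  mul x y := Prod.mk (x.1 * y.1) (x.2 + y.2 + F.1 x.1 y.1)
  one := Prod.mk 1 0
  inv x := Prod.mk x.1⁻¹ (-x.2 - F.1 x.1 x.1⁻¹)
  mul_assoc a b c := by
    have hc := fcoc F.2 a.1 b.1 c.1
    refine Prod.ext (mul_assoc _ _ _) ?_
    show a.2 + b.2 + F.1 a.1 b.1 + c.2 + F.1 (a.1 * b.1) c.1 =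
      a.2 + (b.2 + c.2 + F.1 b.1 c.1) + F.1 a.1 (b.1 * c.1)
    omega
  one_mul a := by
    refine Prod.ext (one_mul _) ?_
    show 0 + a.2 + F.1 1 a.1 = a.2
    rw [f_one_left F.2]; omega
  mul_one a := by
    refine Prod.ext (mul_one _) ?_
    show a.2 + 0 + F.1 a.1 1 = a.2
    rw [f_one_right F.2]; omega
  inv_mul_cancel a := by
    refine Prod.ext (inv_mul_cancel _) ?_
    show -a.2 - F.1 a.1 a.1⁻¹ + a.2 + F.1 a.1⁻¹ a.1 = 0
    rw [f_inv_comm F.2]; omega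
lemma mul_def (x y : Ext G F) : x * y = Prod.mk (x.1 * y.1) (x.2 + y.2 + F.1 x.1 y.1) := rfl
lemma one_def : (1 : Ext G F) = Prod.mk 1 0 := rfl
lemma inv_def (x : Ext G F) : x⁻¹ = Prod.mk x.1⁻¹ (-x.2 - F.1 x.1 x.1⁻¹) := rfl

-- NEW PART
/-- Projection to `G` as a monoid hom. -/
def pr (F : CO G) : Ext G F →* G where
  toFun x := x.1
  map_one' := rfl
  map_mul' _ _ := rfl

lemma fst_zpow (x : Ext G F) (j : ℤ) : (x ^ j).1 = x.1 ^ j := map_zpow (pr F) x j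

/-- The central generator `(1,1)`. -/
def tgen (F : CO G) : Ext G F := Prod.mk 1 1

lemma tgen_comm (x : Ext G F) : Commute (tgen F) x := by
  show tgen F * x = x * tgen F
  rw [mul_def, mul_def]
  refine Prod.ext ?_ ?_
  · show 1 * x.1 = x.1 * 1; group
  · show 1 + x.2 + F.1 1 x.1 = x.2 + 1 + F.1 x.1 1
    rw [f_one_left F.2, f_one_right F.2]; omega

lemma tgen_zpow (j : ℤ) : (tgen F) ^ j = Prod.mk (1:G) j := by
  induction j using Int.induction_on with
  | zero => rfl
  | succ i ih =>
      rw [zpow_add_one, mul_def, ih]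
      refine Prod.ext (one_mul _) ?_
      show (i : ℤ) + 1 + F.1 1 1 = (i : ℤ) + 1
      rw [f_one_left F.2]; omega
  | pred i ih =>
      rw [zpow_sub_one, mul_def, inv_def, ih]
      refine Prod.ext ?_ ?_
      · show (1 : G) * (1 : G)⁻¹ = 1; group
      · show (-i : ℤ) + (-1 - F.1 (tgen F).1 (tgen F).1⁻¹) + F.1 1 (tgen F).1⁻¹ = -i - 1
        show (-i : ℤ) + (-1 - F.1 1 (1:G)⁻¹) + F.1 1 (1:G)⁻¹ = -i - 1
        omega

/-- The left order on the extension. -/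
def elt (F : CO G) (x y : Ext G F) : Prop := x.2 < y.2 ∨ (x.2 = y.2 ∧ clt F.1 x.1 y.1)

def ele (F : CO G) (x y : Ext G F) : Prop := elt F x y ∨ x = y

lemma elt_irrefl (x : Ext G F) : ¬ elt F x x := by
  rintro (h | ⟨_, h⟩)
  · omega
  · exact clt_irrefl _ h

lemma elt_total {x y : Ext G F} (hne : x ≠ y) : elt F x y ∨ elt F y x := by
  rcases lt_trichotomy x.2 y.2 with h | h | h
  · exact Or.inl (Or.inl h)
  · have hg : x.1 ≠ y.1 := fun he => hne (Prod.ext he h)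
    rcases clt_total F.2 hg with hc | hc
    · exact Or.inl (Or.inr ⟨h, hc⟩)
    · exact Or.inr (Or.inr ⟨h.symm, hc⟩)
  · exact Or.inr (Or.inl h)

lemma elt_trans {x y z : Ext G F} (h1 : elt F x y) (h2 : elt F y z) : elt F x z := by
  rcases h1 with h1 | ⟨e1, c1⟩ <;> rcases h2 with h2 | ⟨e2, c2⟩
  · exact Or.inl (by omega)
  · exact Or.inl (by omega)
  · exact Or.inl (by omega)
  · exact Or.inr ⟨by omega, clt_trans F.2 c1 c2⟩

lemma elt_asymm {x y : Ext G F} (h1 : elt F x y) (h2 : elt F y x) : False :=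
  elt_irrefl x (elt_trans h1 h2)

lemma elt_mul_left (x : Ext G F) {y z : Ext G F} (h : elt F y z) : elt F (x * y) (x * z) := by
  have hA := f01 F.2 x.1 y.1
  have hB := f01 F.2 x.1 z.1
  have hm1 : (x * y).2 = x.2 + y.2 + F.1 x.1 y.1 := rfl
  have hm2 : (x * z).2 = x.2 + z.2 + F.1 x.1 z.1 := rfl
  have hg1 : (x * y).1 = x.1 * y.1 := rfl
  have hg2 : (x * z).1 = x.1 * z.1 := rfl
  rcases h with h | ⟨e, hc⟩
  · by_cases hlt : x.2 + y.2 + F.1 x.1 y.1 < x.2 + z.2 + F.1 x.1 z.1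
    · exact Or.inl (by omega)
    · have h1 : F.1 x.1 y.1 = 1 := by omega
      have h0 : F.1 x.1 z.1 = 0 := by omega
      exact Or.inr ⟨by omega, by rw [hg1, hg2]; exact clt_wrap F.2 h1 h0⟩
  · rcases clt_compat F.2 hc x.1 with ⟨h0, h1⟩ | ⟨he, hcc⟩
    · exact Or.inl (by omega)
    · exact Or.inr ⟨by omega, by rw [hg1, hg2]; exact hcc⟩

lemma elt_mul_iff (x : Ext G F) {y z : Ext G F} : elt F (x * y) (x * z) ↔ elt F y z := by
  refine ⟨fun h => ?_, elt_mul_left x⟩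
  have := elt_mul_left x⁻¹ h
  rwa [inv_mul_cancel_left, inv_mul_cancel_left] at this

lemma ele_mul_iff (x : Ext G F) {y z : Ext G F} : ele F (x * y) (x * z) ↔ ele F y z := by
  unfold ele
  rw [elt_mul_iff, mul_left_cancel_iff]

lemma ele_mul_left (x : Ext G F) {y z : Ext G F} (h : ele F y z) : ele F (x * y) (x * z) := by
  rcases h with h | rfl
  · exact Or.inl (elt_mul_left x h)
  · exact Or.inr rfl

lemma elt_of_ele_of_elt {x y z : Ext G F} (h1 : ele F x y) (h2 : elt F y z) : elt F x z := by
  rcases h1 with h1 | rfl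
  · exact elt_trans h1 h2
  · exact h2

lemma elt_of_elt_of_ele {x y z : Ext G F} (h1 : elt F x y) (h2 : ele F y z) : elt F x z := by
  rcases h2 with h2 | rfl
  · exact elt_trans h1 h2
  · exact h1

lemma ele_trans {x y z : Ext G F} (h1 : ele F x y) (h2 : ele F y z) : ele F x z := by
  rcases h1 with h1 | rfl
  · exact Or.inl (elt_of_elt_of_ele h1 h2)
  · exact h2

lemma ele_of_not_elt {x y : Ext G F} (h : ¬ elt F x y) : ele F y x := by
  by_cases he : x = y
  · exact Or.inr he.symm
  · rcases elt_total he with h1 | h1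
    · exact absurd h1 h
    · exact Or.inl h1

lemma one_elt_zpow {x : Ext G F} (h : elt F 1 x) : ∀ j : ℤ, 0 < j → elt F 1 (x ^ j) := by
  have hnat : ∀ k : ℕ, elt F 1 (x ^ (k + 1)) := by
    intro k
    induction k with
    | zero => simpa using h
    | succ i ih =>
        have : elt F (x ^ (i + 1)) (x ^ (i + 1) * x) := by
          have := elt_mul_left (x ^ (i+1)) h
          rwa [mul_one] at this
        rw [pow_succ]
        exact elt_trans ih this
  intro j hj
  obtain ⟨k, rfl⟩ : ∃ k : ℕ, j = (k : ℤ) + 1 :=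
    ⟨(j - 1).toNat, by omega⟩
  have := hnat k
  rw [← zpow_natCast x (k + 1)] at this
  have hcast : ((k + 1 : ℕ) : ℤ) = (k : ℤ) + 1 := by push_cast; ring
  rwa [hcast] at this

lemma one_elt_of_elt_one {x : Ext G F} (h : elt F x 1) : elt F 1 x⁻¹ := by
  have := elt_mul_left x⁻¹ h
  rwa [inv_mul_cancel, mul_one] at this

lemma tf {x : Ext G F} {j : ℤ} (hj : j ≠ 0) (h : x ^ j = 1) : x = 1 := by
  by_contra hx
  have key : ∀ y : Ext G F, elt F 1 y → ∀ i : ℤ, i ≠ 0 → y ^ i ≠ 1 := by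
    intro y hy i hi he
    rcases lt_trichotomy i 0 with h0 | h0 | h0
    · have he' : y ^ (-i) = 1 := by rw [zpow_neg, he, inv_one]
      have h2 := one_elt_zpow hy (-i) (by omega)
      rw [he'] at h2
      exact elt_irrefl 1 h2
    · omega
    · have := one_elt_zpow hy i h0
      rw [he] at this
      exact elt_irrefl 1 this
  rcases elt_total (Ne.symm hx) with h1 | h1
  · exact key x h1 j hj h
  · refine key x⁻¹ (one_elt_of_elt_one h1) j hj ?_
    rw [inv_zpow, h, inv_one]

end Ext

section Main

variable {F : CO G}

lemma fst_mul (x y : Ext G F) : (x * y).1 = x.1 * y.1 := rfl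

/-- Constructor for elements of `Ext`. -/
def emk (F : CO G) (g : G) (m : ℤ) : Ext G F := Prod.mk g m

theorem main' (K : Subgroup G) [K.Normal] (w : Ext G F)
    (hwc : ∀ x : Ext G F, Commute w x) (hw1 : elt F 1 w)
    (hker : ∀ x : Ext G F, (x.1 : G ⧸ K) = 1 ↔ ∃ j : ℤ, x = w ^ j)
    (hlo : ∀ x : Ext G F, ∃ j : ℤ, ele F (w ^ j) x)
    (hhi : ∀ x : Ext G F, ∃ j : ℤ, elt F x (w ^ j)) :
    CircularlyOrderable (G ⧸ K) := by
  classical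
  have hzadd : ∀ j k : ℤ, w ^ j * w ^ k = w ^ (j + k) := fun j k => (zpow_add w j k).symm
  have hwpow_lt : ∀ {j k : ℤ}, j < k → elt F (w ^ j) (w ^ k) := by
    intro j k hjk
    have h1 : elt F 1 (w ^ (k - j)) := one_elt_zpow hw1 _ (by omega)
    have h2 := elt_mul_left (w ^ j) h1
    rwa [mul_one, hzadd, (by ring : j + (k - j) = k)] at h2
  have hwpow_lt_rev : ∀ {j k : ℤ}, elt F (w ^ j) (w ^ k) → j < k := by
    intro j k h
    by_contra hle
    rcases eq_or_lt_of_le (le_of_not_gt hle) with he | hlt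
    · rw [he] at h; exact elt_irrefl _ h
    · exact elt_asymm h (hwpow_lt hlt)
  have hcomm : ∀ (x : Ext G F) (j : ℤ), x * w ^ j = w ^ j * x :=
    fun x j => ((hwc x).zpow_left j).eq.symm
  have hπw : ∀ j : ℤ, (((w ^ j).1 : G) : G ⧸ K) = 1 := fun j => (hker _).2 ⟨j, rfl⟩
  -- greatest power of w below x
  have key : ∀ x : Ext G F, ∃ k : ℤ, ele F (w ^ k) x ∧ ∀ j : ℤ, ele F (w ^ j) x → j ≤ k := by
    intro x
    obtain ⟨b, hb⟩ := hhi x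
    exact Int.exists_greatest_of_bdd
      ⟨b, fun j hj => le_of_lt (hwpow_lt_rev (elt_of_ele_of_elt hj hb))⟩ (hlo x)
  choose ν hν1 hν2 using key
  have hν3 : ∀ x, elt F x (w ^ (ν x + 1)) := by
    intro x
    by_contra hcon
    have := hν2 x (ν x + 1) (ele_of_not_elt hcon)
    omega
  have hν_unique : ∀ (x : Ext G F) (k : ℤ), ele F (w ^ k) x → elt F x (w ^ (k + 1)) → ν x = k := by
    intro x k h1 h2
    have hk := hν2 x k h1
    by_contra hne
    have hlt : k + 1 ≤ ν x := by omega
    rcases eq_or_lt_of_le hlt with he | hlt2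
    · have h4 := hν1 x
      rw [← he] at h4
      exact elt_irrefl x (elt_of_elt_of_ele h2 h4)
    · exact elt_irrefl x
        (elt_of_elt_of_ele (elt_trans h2 (hwpow_lt hlt2)) (hν1 x))
  have hνmul : ∀ (j : ℤ) (x : Ext G F), ν (w ^ j * x) = j + ν x := by
    intro j x
    refine hν_unique _ _ ?_ ?_
    · have h1 := ele_mul_left (w ^ j) (hν1 x)
      rwa [hzadd] at h1
    · have h1 := elt_mul_left (w ^ j) (hν3 x)
      rwa [hzadd, (by ring : j + (ν x + 1) = j + ν x + 1)] at h1
  have hν_one : ν 1 = 0 :=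
    hν_unique 1 0 (by rw [zpow_zero]; exact Or.inr rfl) (by rw [zero_add, zpow_one]; exact hw1)
  have hν_w : ν w = 1 := by
    refine hν_unique w 1 (by rw [zpow_one]; exact Or.inr rfl) ?_
    have := hwpow_lt (show (1:ℤ) < 1 + 1 by omega)
    rwa [zpow_one] at this
  -- representatives
  set ρ : G ⧸ K → Ext G F :=
    fun p => w ^ (-(ν (emk F (Quotient.out p) 0))) * emk F (Quotient.out p) 0 with hρdef
  have hρπ : ∀ p : G ⧸ K, (((ρ p).1 : G) : G ⧸ K) = p := by
    intro p
    rw [hρdef]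
    show ((((w ^ (-(ν _))).1 * (Quotient.out p)) : G) : G ⧸ K) = p
    rw [QuotientGroup.mk_mul, hπw, one_mul, QuotientGroup.out_eq']
  have hρν : ∀ p : G ⧸ K, ν (ρ p) = 0 := by
    intro p
    rw [hρdef]
    show ν (w ^ (-(ν _)) * _) = 0
    rw [hνmul]
    omega
  have hρ_eq : ∀ (p : G ⧸ K) (x : Ext G F), ((x.1 : G) : G ⧸ K) = p → ν x = 0 → ρ p = x := by
    intro p x hx hx0
    have h1 : (((x⁻¹ * (ρ p)).1 : G) : G ⧸ K) = 1 := by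
      rw [fst_mul, QuotientGroup.mk_mul]
      show ((x.1⁻¹ : G) : G ⧸ K) * _ = 1
      rw [QuotientGroup.mk_inv, hx, hρπ p, inv_mul_cancel]
    obtain ⟨j, hj⟩ := (hker _).1 h1
    have h2 : ρ p = x * w ^ j := by rw [← hj]; group
    have h3 : ν (ρ p) = j + ν x := by rw [h2, hcomm, hνmul]
    rw [hρν p, hx0] at h3
    rw [h2, (by omega : j = 0), zpow_zero, mul_one]
  have hD : ∀ x : Ext G F, ν x = 0 → ele F 1 x ∧ elt F x w := by
    intro x hx
    constructor
    · have := hν1 x; rwa [hx, zpow_zero] at this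
    · have := hν3 x; rwa [hx, zero_add, zpow_one] at this
  have hw2 : w * w = w ^ (2:ℤ) := by
    rw [(by norm_num : (2:ℤ) = 1 + 1), ← hzadd, zpow_one]
  have hprod01 : ∀ x y : Ext G F, ν x = 0 → ν y = 0 → ν (x * y) = 0 ∨ ν (x * y) = 1 := by
    intro x y hx hy
    obtain ⟨hx1, hxw⟩ := hD x hx
    obtain ⟨hy1, hyw⟩ := hD y hy
    have hge : ele F 1 (x * y) := by
      by_contra hcon
      have hne : x * y ≠ 1 := fun he => hcon (Or.inr he.symm)
      have hlt : elt F (x * y) 1 := by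
        rcases elt_total hne with h | h
        · exact h
        · exact absurd (Or.inl h) hcon
      have h2 : elt F y x⁻¹ := by
        have := elt_mul_left x⁻¹ hlt
        rwa [inv_mul_cancel_left, mul_one] at this
      have h3 : ele F x⁻¹ 1 := by
        have := ele_mul_left x⁻¹ hx1
        rwa [mul_one, inv_mul_cancel] at this
      exact elt_irrefl 1 (elt_of_elt_of_ele (elt_of_ele_of_elt hy1 h2) h3)
    have hlt2 : elt F (x * y) (w ^ (2:ℤ)) := by
      have ha : elt F (x * y) (x * w) := elt_mul_left x hyw
      have hb : x * w = w * x := (hwc x).eq.symm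
      have hc : elt F (w * x) (w * w) := elt_mul_left w hxw
      rw [hb] at ha
      rw [hw2] at hc
      exact elt_trans ha hc
    have h0 : 0 ≤ ν (x * y) := hν2 (x * y) 0 (by rwa [zpow_zero])
    have h2 : ν (x * y) < 2 := by
      by_contra hcon
      have hle : ele F (w ^ (2:ℤ)) (w ^ (ν (x * y))) := by
        rcases eq_or_lt_of_le (by omega : (2:ℤ) ≤ ν (x * y)) with he | hlt
        · rw [he]; exact Or.inr rfl
        · exact Or.inl (hwpow_lt hlt)
      exact elt_irrefl _ (elt_of_elt_of_ele hlt2 (ele_trans hle (hν1 _)))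
    omega
  -- the circular ordering on the quotient
  refine ⟨fun p q => ν (ρ p * ρ q), ?_, ?_, ?_, ?_⟩
  · exact fun p q => hprod01 _ _ (hρν p) (hρν q)
  · intro q
    have hρ1 : ρ (1 : G ⧸ K) = 1 := by
      refine hρ_eq 1 1 ?_ hν_one
      show (((1:G) : G ⧸ K)) = 1
      exact QuotientGroup.mk_one K
    show ν (ρ 1 * ρ q) = 0 ∧ ν (ρ q * ρ 1) = 0
    constructor
    · rw [hρ1, one_mul]; exact hρν q
    · rw [hρ1, mul_one]; exact hρν q
  · intro q hq
    show ν (ρ q * ρ q⁻¹) = 1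
    have hx0 : ν (ρ q) = 0 := hρν q
    have hxq : (((ρ q).1 : G) : G ⧸ K) = q := hρπ q
    have hxne : ρ q ≠ 1 := by
      intro he
      apply hq
      rw [← hxq, he]
      exact QuotientGroup.mk_one K
    have hx1 : elt F 1 (ρ q) := by
      rcases (hD _ hx0).1 with h | h
      · exact h
      · exact absurd h.symm hxne
    have hρinv : ρ q⁻¹ = w * (ρ q)⁻¹ := by
      refine hρ_eq _ _ ?_ ?_
      · rw [fst_mul, QuotientGroup.mk_mul]
        show _ * ((((ρ q).1)⁻¹ : G) : G ⧸ K) = q⁻¹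
        have hw1' : ((w.1 : G) : G ⧸ K) = 1 := by
          have := hπw 1; rwa [zpow_one] at this
        rw [hw1', one_mul, QuotientGroup.mk_inv, hxq]
      · have heq : w * (ρ q)⁻¹ = w ^ (1:ℤ) * (ρ q)⁻¹ := by rw [zpow_one]
        rw [heq, hνmul]
        have hinv : ν (ρ q)⁻¹ = -1 := by
          refine hν_unique _ _ ?_ ?_
          · have h1 : elt F ((ρ q)⁻¹ * (ρ q)) ((ρ q)⁻¹ * w) := elt_mul_left _ (hD _ hx0).2
            rw [inv_mul_cancel] at h1
            have h2 : (ρ q)⁻¹ * w = w * (ρ q)⁻¹ := (hwc _).eq.symm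
            rw [h2] at h1
            have h3 := elt_mul_left w⁻¹ h1
            rw [mul_one, inv_mul_cancel_left] at h3
            have h4 : w⁻¹ = w ^ (-1 : ℤ) := by rw [zpow_neg, zpow_one]
            rw [h4] at h3
            exact Or.inl h3
          · have h1 := elt_mul_left (ρ q)⁻¹ hx1
            rw [mul_one, inv_mul_cancel] at h1
            rwa [(by norm_num : (-1:ℤ) + 1 = 0), zpow_zero]
        rw [hinv]
        norm_num
    rw [hρinv]
    have harr : ρ q * (w * (ρ q)⁻¹) = w := by
      rw [← mul_assoc, ← (hwc (ρ q)).eq, mul_assoc, mul_inv_cancel, mul_one]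
    rw [harr, hν_w]
  · intro p q r
    show ν (ρ q * ρ r) - ν (ρ (p * q) * ρ r) + ν (ρ p * ρ (q * r)) - ν (ρ p * ρ q) = 0
    have hmulrep : ∀ s u : G ⧸ K, ρ (s * u) = w ^ (-(ν (ρ s * ρ u))) * (ρ s * ρ u) := by
      intro s u
      refine hρ_eq _ _ ?_ ?_
      · rw [fst_mul, fst_mul, QuotientGroup.mk_mul, QuotientGroup.mk_mul, hπw, one_mul,
          hρπ, hρπ]
      · rw [hνmul]; omega
    have e1 : ν (ρ (p * q) * ρ r) = -(ν (ρ p * ρ q)) + ν (ρ p * ρ q * ρ r) := by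
      rw [hmulrep p q, mul_assoc, hνmul, ← mul_assoc]
    have e2' : ∀ (x y : Ext G F) (m : ℤ), ν (x * (w ^ m * y)) = m + ν (x * y) := by
      intro x y m
      rw [← mul_assoc, hcomm x m, mul_assoc, hνmul]
    have e2 : ν (ρ p * ρ (q * r)) = -(ν (ρ q * ρ r)) + ν (ρ p * (ρ q * ρ r)) := by
      rw [hmulrep q r, e2']
    have e3 : ρ p * ρ q * ρ r = ρ p * (ρ q * ρ r) := mul_assoc _ _ _
    rw [e3] at e1
    omega

theorem main'' (K : Subgroup G) [K.Normal] {F : CO G} (w : Ext G F)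
    (hwc : ∀ x : Ext G F, Commute w x)
    (hker : ∀ x : Ext G F, ((x.1 : G) : G ⧸ K) = 1 ↔ ∃ j : ℤ, x = w ^ j)
    (ht : ∃ N : ℤ, w ^ N = tgen F) :
    CircularlyOrderable (G ⧸ K) := by
  have hlo : ∀ x : Ext G F, ∃ j : ℤ, ele F (w ^ j) x := by
    intro x
    obtain ⟨N, hN⟩ := ht
    refine ⟨N * x.2, ?_⟩
    rw [zpow_mul, hN, tgen_zpow]
    by_cases hg : x.1 = 1
    · exact Or.inr (Prod.ext hg.symm rfl)
    · exact Or.inl (Or.inr ⟨rfl, clt_one_left hg⟩)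
  have hhi : ∀ x : Ext G F, ∃ j : ℤ, elt F x (w ^ j) := by
    intro x
    obtain ⟨N, hN⟩ := ht
    refine ⟨N * (x.2 + 1), ?_⟩
    rw [zpow_mul, hN, tgen_zpow]
    refine Or.inl ?_
    show x.2 < x.2 + 1
    omega
  have hwne : (1 : Ext G F) ≠ w := by
    obtain ⟨N, hN⟩ := ht
    intro he
    rw [← he, one_zpow] at hN
    have h2 := congrArg (fun y : Ext G F => y.2) hN
    have h3 : (0 : ℤ) = 1 := h2
    omega
  rcases elt_total hwne with h1 | h1
  · exact main' K w hwc h1 hker hlo hhi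
  · have hw1' : elt F 1 w⁻¹ := one_elt_of_elt_one h1
    refine main' K w⁻¹ (fun x => (hwc x).inv_left) hw1' ?_ ?_ ?_
    · intro x
      rw [hker x]
      constructor
      · rintro ⟨j, rfl⟩
        exact ⟨-j, by simp [inv_zpow']⟩
      · rintro ⟨j, rfl⟩
        exact ⟨-j, by simp [inv_zpow']⟩
    · intro x
      obtain ⟨j, hj⟩ := hlo x
      exact ⟨-j, by simpa [inv_zpow'] using hj⟩
    · intro x
      obtain ⟨j, hj⟩ := hhi x
      exact ⟨-j, by simpa [inv_zpow'] using hj⟩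

theorem quotient_circ (K : Subgroup G) [K.Normal]
    (hfin : Finite K) (hcyc : IsCyclic K) (F : CO G) :
    CircularlyOrderable (G ⧸ K) := by
  classical
  obtain ⟨ζ, hζ⟩ := hcyc.exists_generator
  set z : G := (ζ : G) with hzdef
  have hzK : z ∈ K := ζ.2
  have hz : ∀ g ∈ K, ∃ i : ℤ, z ^ i = g := by
    intro g hg
    obtain ⟨i, hi⟩ := Subgroup.mem_zpowers_iff.mp (hζ ⟨g, hg⟩)
    refine ⟨i, ?_⟩
    have := congrArg (Subtype.val) hi
    simpa using this
  set a : Ext G F := emk F z 0 with hadef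
  have hafst : a.1 = z := rfl
  have hdecomp : ∀ g ∈ K, ∀ m : ℤ, ∃ i jj : ℤ, emk F g m = a ^ i * tgen F ^ jj := by
    intro g hg m
    obtain ⟨i, hi⟩ := hz g hg
    refine ⟨i, m - (a ^ i).2, ?_⟩
    rw [mul_def, tgen_zpow]
    refine (Prod.ext ?_ ?_).symm
    · show (a ^ i).1 * 1 = g
      rw [mul_one, fst_zpow, hafst, hi]
    · show (a ^ i).2 + (m - (a ^ i).2) + F.1 (a ^ i).1 1 = m
      rw [f_one_right F.2]
      omega
  by_cases hz1 : z = 1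
  · -- K is trivial
    refine main'' K (tgen F) tgen_comm ?_ ⟨1, zpow_one _⟩
    intro x
    rw [QuotientGroup.eq_one_iff]
    constructor
    · intro hx
      obtain ⟨i, hi⟩ := hz x.1 hx
      rw [hz1, one_zpow] at hi
      refine ⟨x.2, ?_⟩
      rw [tgen_zpow]
      symm
      exact Prod.ext hi rfl
    · rintro ⟨j, rfl⟩
      rw [tgen_zpow]
      show (1 : G) ∈ K
      exact K.one_mem
  · -- K is nontrivial
    haveI : Finite ↥K := hfin
    set n : ℕ := orderOf ζ with hndef
    have hnpos : 0 < n := orderOf_pos ζ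
    have hzn : z ^ (n : ℤ) = 1 := by
      rw [zpow_natCast]
      have := pow_orderOf_eq_one ζ
      have h2 := congrArg (Subtype.val) this
      exact (by exact_mod_cast h2 : (ζ : G) ^ orderOf ζ = 1)
    set c : ℤ := (a ^ (n : ℤ)).2 with hcdef
    have hac : a ^ (n : ℤ) = tgen F ^ c := by
      rw [tgen_zpow]
      refine Prod.ext ?_ rfl
      rw [fst_zpow, hafst, hzn]
    have hc0 : c ≠ 0 := by
      intro hc
      rw [hc, zpow_zero] at hac
      have ha1 : a = 1 := tf (show (n : ℤ) ≠ 0 by exact_mod_cast hnpos.ne') hac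
      exact hz1 (congrArg Prod.fst ha1)
    set d : ℕ := Int.gcd (n : ℤ) c with hddef
    have hdpos : 0 < d := Int.gcd_pos_of_ne_zero_right _ hc0
    set n' : ℤ := (n : ℤ) / d with hn'def
    set c' : ℤ := c / d with hc'def
    have hdn : (d : ℤ) ∣ (n : ℤ) := Int.gcd_dvd_left _ _
    have hdc : (d : ℤ) ∣ c := Int.gcd_dvd_right _ _
    have hn'd : n' * d = (n : ℤ) := Int.ediv_mul_cancel hdn
    have hc'd : c' * d = c := Int.ediv_mul_cancel hdc
    have hn'pos : 0 < n' := by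
      have hd' : (0:ℤ) < (d:ℤ) := by exact_mod_cast hdpos
      have hn0 : (0:ℤ) < (n:ℤ) := by exact_mod_cast hnpos
      nlinarith [hn'd]
    have hcomm_at : Commute a (tgen F) := (tgen_comm a).symm
    have han' : a ^ n' = tgen F ^ c' := by
      have h1 : (a ^ n' * (tgen F ^ c')⁻¹) ^ (d : ℤ) = 1 := by
        have hcmm : Commute (a ^ n') ((tgen F ^ c')⁻¹) :=
          ((hcomm_at.zpow_left n').zpow_right c').inv_right
        rw [hcmm.mul_zpow, ← zpow_mul, hn'd, hac, inv_zpow', ← zpow_mul]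
        rw [(by ring : c' * -(d:ℤ) = -(c' * d)), hc'd, ← zpow_add]
        simp
      have h2 := tf (show (d : ℤ) ≠ 0 by exact_mod_cast hdpos.ne') h1
      rwa [mul_inv_eq_one] at h2
    have hgcd1 : Int.gcd n' c' = 1 := Int.gcd_div_gcd_div_gcd (by exact_mod_cast hdpos)
    set A : ℤ := Int.gcdA n' c' with hAdef
    set B : ℤ := Int.gcdB n' c' with hBdef
    have hbez : n' * A + c' * B = 1 := by
      have := Int.gcd_eq_gcd_ab n' c'
      rw [hgcd1] at this
      exact_mod_cast this.symm
    set w : Ext G F := a ^ B * tgen F ^ A with hwdef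
    have hcomm_w : Commute (a ^ B) (tgen F ^ A) := (hcomm_at.zpow_left B).zpow_right A
    have hwc' : w ^ c' = a := by
      rw [hwdef, hcomm_w.mul_zpow, ← zpow_mul, ← zpow_mul]
      have h1 : tgen F ^ (A * c') = a ^ (n' * A) := by
        calc tgen F ^ (A * c') = (tgen F ^ c') ^ A := by rw [← zpow_mul, mul_comm]
          _ = (a ^ n') ^ A := by rw [han']
          _ = a ^ (n' * A) := by rw [← zpow_mul]
      rw [h1, ← zpow_add]
      rw [(by linear_combination hbez : B * c' + n' * A = 1), zpow_one]
    have hwn' : w ^ n' = tgen F := by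
      rw [hwdef, hcomm_w.mul_zpow, ← zpow_mul, ← zpow_mul]
      have h1 : a ^ (B * n') = tgen F ^ (c' * B) := by
        calc a ^ (B * n') = (a ^ n') ^ B := by rw [← zpow_mul, mul_comm]
          _ = (tgen F ^ c') ^ B := by rw [han']
          _ = tgen F ^ (c' * B) := by rw [← zpow_mul]
      rw [h1, ← zpow_add]
      rw [(by linear_combination hbez : c' * B + A * n' = 1), zpow_one]
    have hwK : w.1 ∈ K := by
      rw [hwdef, fst_mul, fst_zpow, fst_zpow, hafst]
      show z ^ B * (tgen F).1 ^ A ∈ K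
      have h1 : (tgen F).1 = (1 : G) := rfl
      rw [h1, one_zpow, mul_one]
      exact K.zpow_mem hzK B
    have hker : ∀ x : Ext G F, ((x.1 : G) : G ⧸ K) = 1 ↔ ∃ j : ℤ, x = w ^ j := by
      intro x
      rw [QuotientGroup.eq_one_iff]
      constructor
      · intro hx
        obtain ⟨i, jj, hij⟩ := hdecomp x.1 hx x.2
        refine ⟨c' * i + n' * jj, ?_⟩
        rw [zpow_add, zpow_mul, zpow_mul, hwc', hwn']
        rw [← hij]
        exact Prod.mk.eta.symm
      · rintro ⟨j, rfl⟩
        rw [fst_zpow]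
        exact K.zpow_mem hwK j
    have hwne1 : w ≠ 1 := by
      intro he
      rw [he, one_zpow] at hwn'
      have h2 := congrArg (fun y : Ext G F => y.2) hwn'
      have h3 : (0 : ℤ) = 1 := h2
      omega
    have hwc : ∀ x : Ext G F, Commute w x := by
      intro x
      have h1 : ((( x * w * x⁻¹).1 : G) : G ⧸ K) = 1 := by
        rw [QuotientGroup.eq_one_iff]
        show (x * w * x⁻¹).1 ∈ K
        have h2 : (x * w * x⁻¹).1 = x.1 * w.1 * x.1⁻¹ := rfl
        rw [h2]
        exact Subgroup.Normal.conj_mem ‹K.Normal› _ hwK _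
      obtain ⟨s, hs⟩ := (hker _).1 h1
      have h3 : (x * w * x⁻¹) ^ n' = x * w ^ n' * x⁻¹ := by
        have := map_zpow (MulAut.conj x) w n'
        simpa [MulAut.conj_apply] using this.symm
      have h4 : x * w ^ n' * x⁻¹ = tgen F := by
        rw [hwn']
        have h5 := (tgen_comm x).eq
        rw [← h5, mul_assoc, mul_inv_cancel, mul_one]
      have h6 : w ^ (s * n') = w ^ n' := by
        rw [zpow_mul, ← hs, h3, h4, hwn']
      have h7 : w ^ (s * n' - n') = 1 := by
        rw [zpow_sub, h6, mul_inv_cancel]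
      have h8 : s * n' - n' = 0 := by
        by_contra hne
        exact hwne1 (tf hne h7)
      have hs1 : s = 1 := by
        have : (s - 1) * n' = 0 := by ring_nf; omega
        rcases mul_eq_zero.mp this with h | h
        · omega
        · omega
      rw [hs1, zpow_one] at hs
      have h9 : x * w = w * x := by
        have := congrArg (fun y => y * x) hs
        simpa [mul_assoc] using this
      exact h9.symm
    exact main'' K w hwc hker ⟨n', hwn'⟩

end Main

end CircQuot

/-- If `G` is circularly-orderable and `K` is a finite cyclic normal subgroup of `G`,
then `G/K` is circularly-orderable. -/
theorem quotient_by_finite_cyclic_circularlyOrderable {G : Type*} [Group G]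
    (h : CircularlyOrderable G) (K : Subgroup G) [K.Normal]
    (hfin : Finite K) (hcyc : IsCyclic K) :
    CircularlyOrderable (G ⧸ K) := by
  obtain ⟨f, hf⟩ := h
  exact CircQuot.quotient_circ K hfin hcyc ⟨f, hf⟩
end

section
/- Let G be a group and n ≥ 2. The direct product G × ℤ/nℤ is circularly-orderable if and only if there exists an inhomogeneous circular ordering f on G whose reduction mod n is a ℤ/nℤ-valued coboundary, i.e., there exists a function d : G → ℤ/nℤ with d(1) = 0 such that f(g,h) ≡ d(g) + d(h) − d(gh) (mod n) for all g,h ∈ G. -/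
namespace CircAux

variable {H : Type*} [Group H]

/-- The identity/cocycle conditions needed for the extension to be a group. -/
def gd (F : H → H → ℤ) : Prop :=
  (∀ g : H, F 1 g = 0 ∧ F g 1 = 0) ∧
  (∀ g h k : H, F h k - F (g * h) k + F g (h * k) - F g h = 0)

open Classical in
noncomputable def fx (F : H → H → ℤ) : H → H → ℤ :=
  if gd F then F else fun _ _ => 0

lemma gd_fx (F : H → H → ℤ) : gd (fx F) := by
  unfold fx
  split
  · assumption
  · exact ⟨fun g => ⟨rfl, rfl⟩, fun g h k => by ring⟩

lemma fx_eq {F : H → H → ℤ} (h : gd F) : fx F = F := if_pos h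

lemma gd_of {F : H → H → ℤ} (hF : IsCircularOrdering F) : gd F := ⟨hF.2.1, hF.2.2.2⟩

/-- symmetric inverse values -/
lemma gd_inv_symm {F : H → H → ℤ} (h : gd F) (x : H) : F x⁻¹ x = F x x⁻¹ := by
  have := h.2 x x⁻¹ x
  simp only [mul_inv_cancel, inv_mul_cancel, (h.1 x).1, (h.1 x).2] at this
  linarith

@[nolint unusedArguments]
def L (_F : H → H → ℤ) : Type _ := H × ℤ

variable {F : H → H → ℤ}

noncomputable instance : Mul (L F) := ⟨fun x y => (x.1 * y.1, x.2 + y.2 + fx F x.1 y.1)⟩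
instance : One (L F) := ⟨((1 : H), (0 : ℤ))⟩
noncomputable instance : Inv (L F) := ⟨fun x => (x.1⁻¹, -x.2 - fx F x.1 x.1⁻¹)⟩

lemma mul_fst (x y : L F) : (x * y).1 = x.1 * y.1 := rfl
lemma mul_snd (x y : L F) : (x * y).2 = x.2 + y.2 + fx F x.1 y.1 := rfl
lemma one_fst : (1 : L F).1 = 1 := rfl
lemma one_snd : (1 : L F).2 = 0 := rfl
lemma inv_fst (x : L F) : (x⁻¹).1 = x.1⁻¹ := rfl
lemma inv_snd (x : L F) : (x⁻¹).2 = -x.2 - fx F x.1 x.1⁻¹ := rfl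

noncomputable instance : Group (L F) := by
  refine Group.ofLeftAxioms (fun a b c => ?_) (fun a => ?_) (fun a => ?_)
  · have hc := (gd_fx F).2 a.1 b.1 c.1
    refine Prod.ext (mul_assoc _ _ _) ?_
    simp only [mul_snd, mul_fst]
    linarith
  · refine Prod.ext (one_mul _) ?_
    simp only [mul_snd, one_snd, one_fst, ((gd_fx F).1 a.1).1]
    ring
  · refine Prod.ext (inv_mul_cancel _) ?_
    simp only [mul_snd, inv_snd, inv_fst, one_snd]
    rw [gd_inv_symm (gd_fx F) a.1]
    ring

/-- first projection as a monoid hom -/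
def π₁ : L F →* H where
  toFun := Prod.fst
  map_one' := rfl
  map_mul' _ _ := rfl

/-- the central element `z`. -/
def zel (F : H → H → ℤ) : L F := ((1 : H), (1 : ℤ))

lemma zel_pow_nat (m : ℕ) : (zel F) ^ m = ((1 : H), (m : ℤ)) := by
  induction m with
  | zero => rfl
  | succ k ih =>
      rw [pow_succ, ih]
      refine Prod.ext (show (1:H) * 1 = 1 from one_mul _) ?_
      show (k:ℤ) + 1 + fx F 1 1 = ((k+1:ℕ):ℤ)
      simp only [((gd_fx F).1 1).1]
      push_cast; ring

lemma zel_zpow (k : ℤ) : (zel F) ^ k = ((1 : H), k) := by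
  rcases Int.natAbs_eq k with h | h
  · rw [h, zpow_natCast, zel_pow_nat]
  · rw [h, zpow_neg, zpow_natCast, zel_pow_nat]
    refine Prod.ext (show ((1:H))⁻¹ = 1 from inv_one) ?_
    show -((k.natAbs : ℕ) : ℤ) - fx F 1 (1:H)⁻¹ = -((k.natAbs:ℕ):ℤ)
    simp [((gd_fx F).1 1).1]

lemma zel_central (x : L F) : zel F * x = x * zel F := by
  refine Prod.ext (show (1:H) * x.1 = x.1 * 1 by simp) ?_
  show 1 + x.2 + fx F 1 x.1 = x.2 + 1 + fx F x.1 1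
  rw [((gd_fx F).1 x.1).1, ((gd_fx F).1 x.1).2]
  ring

lemma eq_zel_zpow {x : L F} (h : x.1 = 1) : x = (zel F) ^ x.2 := by
  rw [zel_zpow]
  exact Prod.ext h rfl

end CircAux

section Order
namespace CircAux
variable {H : Type*} [Group H] {F : H → H → ℤ}

/-- the left-invariant order -/
def cle (F : H → H → ℤ) (x y : L F) : Prop := 0 ≤ (x⁻¹ * y).2

lemma F_nonneg (hF : IsCircularOrdering F) (g h : H) : 0 ≤ F g h := by
  rcases hF.1 g h with h' | h' <;> omega

lemma F_le_one (hF : IsCircularOrdering F) (g h : H) : F g h ≤ 1 := by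
  rcases hF.1 g h with h' | h' <;> omega

lemma cle_refl (x : L F) : cle F x x := by
  unfold cle
  rw [inv_mul_cancel]
  simp [one_snd]

lemma cle_mul_left_iff (a x y : L F) : cle F (a * x) (a * y) ↔ cle F x y := by
  unfold cle
  rw [mul_inv_rev, mul_assoc, inv_mul_cancel_left]

lemma cle_trans (hF : IsCircularOrdering F) {x y z : L F}
    (h1 : cle F x y) (h2 : cle F y z) : cle F x z := by
  unfold cle at *
  have e : x⁻¹ * z = (x⁻¹ * y) * (y⁻¹ * z) := by group
  rw [e, mul_snd, fx_eq (gd_of hF)]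
  have := F_nonneg hF (x⁻¹ * y).1 (y⁻¹ * z).1
  omega

lemma inv_mul_flip (x y : L F) : (x⁻¹ * y)⁻¹ = y⁻¹ * x := by group

lemma cle_total (hF : IsCircularOrdering F) (x y : L F) : cle F x y ∨ cle F y x := by
  by_cases h : cle F x y
  · exact Or.inl h
  · right
    unfold cle at *
    have e : y⁻¹ * x = (x⁻¹ * y)⁻¹ := by group
    rw [e, inv_snd, fx_eq (gd_of hF)]
    have := F_le_one hF (x⁻¹ * y).1 ((x⁻¹ * y).1)⁻¹
    omega

lemma cle_antisymm (hF : IsCircularOrdering F) {x y : L F}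
    (h1 : cle F x y) (h2 : cle F y x) : x = y := by
  unfold cle at *
  have e : y⁻¹ * x = (x⁻¹ * y)⁻¹ := by group
  rw [e, inv_snd, fx_eq (gd_of hF)] at h2
  have hnn := F_nonneg hF (x⁻¹ * y).1 ((x⁻¹ * y).1)⁻¹
  have h2' : (x⁻¹ * y).2 = 0 ∧ F (x⁻¹ * y).1 ((x⁻¹ * y).1)⁻¹ = 0 := by omega
  have hone : (x⁻¹ * y).1 = 1 := by
    by_contra hne
    have := hF.2.2.1 _ hne
    omega
  have : x⁻¹ * y = 1 := Prod.ext hone h2'.1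
  exact (inv_mul_eq_one.mp this)

lemma one_le_pow (hF : IsCircularOrdering F) {v : L F} (h : cle F 1 v) (m : ℕ) :
    cle F 1 (v ^ m) := by
  induction m with
  | zero => simpa using cle_refl (F := F) 1
  | succ k ih =>
      have : cle F (v ^ k * 1) (v ^ k * v) := (cle_mul_left_iff _ _ _).mpr h
      rw [mul_one] at this
      rw [pow_succ]
      exact cle_trans hF ih this

lemma one_le_zpow (hF : IsCircularOrdering F) {v : L F} (h : cle F 1 v) {k : ℤ}
    (hk : 0 ≤ k) : cle F 1 (v ^ k) := by
  have : v ^ k = v ^ (k.toNat : ℕ) := by rw [← zpow_natCast, Int.toNat_of_nonneg hk]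
  rw [this]
  exact one_le_pow hF h _

lemma cle_zpow_le (hF : IsCircularOrdering F) {v : L F} (h : cle F 1 v) {j j' : ℤ}
    (hjj : j ≤ j') : cle F (v ^ j) (v ^ j') := by
  have e : v ^ j' = v ^ j * v ^ (j' - j) := by rw [← zpow_add]; ring_nf
  rw [e]
  have := (cle_mul_left_iff (v ^ j) 1 (v ^ (j' - j))).mpr
  simpa using this (one_le_zpow hF h (by omega))

lemma cle_zel_zpow_iff (hF : IsCircularOrdering F) (a : ℤ) (ξ : L F) :
    cle F ((zel F) ^ a) ξ ↔ a ≤ ξ.2 := by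
  unfold cle
  rw [← zpow_neg, zel_zpow]
  show 0 ≤ -a + ξ.2 + fx F 1 ξ.1 ↔ a ≤ ξ.2
  rw [fx_eq (gd_of hF)]
  simp only [(hF.2.1 ξ.1).1]
  omega

end CircAux
end Order

section Height
namespace CircAux
variable {H : Type*} [Group H] {F : H → H → ℤ} {n : ℕ}

lemma u_ne_one (hF : IsCircularOrdering F) {u : L F} (huZ : u ^ (n : ℤ) = zel F) :
    u ≠ 1 := by
  intro h
  rw [h, one_zpow] at huZ
  have : (zel F).2 = (1 : L F).2 := by rw [huZ]
  simp [zel, one_snd] at this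

lemma one_le_u (hF : IsCircularOrdering F) {u : L F} (huZ : u ^ (n : ℤ) = zel F) :
    cle F 1 u := by
  rcases cle_total hF 1 u with h | h
  · exact h
  · -- u ≤ 1 : derive z ≤ 1, contradiction
    exfalso
    have hz : cle F 1 (zel F) := by
      have := (cle_zel_zpow_iff hF 0 (zel F)).mpr (by simp [zel])
      simpa using this
    have hz' : cle F (zel F) 1 := by
      rw [← huZ]
      have key : ∀ m : ℕ, cle F (u ^ m) 1 := by
        intro m
        induction m with
        | zero => simpa using cle_refl (F := F) 1
        | succ k ih =>
            have h2 : cle F (u ^ k * u) (u ^ k * 1) := (cle_mul_left_iff _ _ _).mpr h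
            rw [mul_one] at h2
            rw [pow_succ]
            exact cle_trans hF h2 ih
      have h' := key n
      rw [← zpow_natCast] at h'
      exact h'
    have := cle_antisymm hF hz hz'
    have : (zel F).2 = (1 : L F).2 := by rw [← this]
    simp [zel, one_snd] at this

lemma exists_height (hF : IsCircularOrdering F) (hn : 1 ≤ n) {u : L F}
    (huZ : u ^ (n : ℤ) = zel F) (ξ : L F) :
    ∃ j : ℤ, cle F (u ^ j) ξ ∧ ¬ cle F (u ^ (j + 1)) ξ := by
  have hu1 := one_le_u hF huZ
  have key : ∀ a : ℤ, u ^ ((n : ℤ) * a) = (zel F) ^ a := by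
    intro a; rw [zpow_mul, huZ]
  have hbdd : ∀ j : ℤ, cle F (u ^ j) ξ → j ≤ (n : ℤ) * (ξ.2 + 1) := by
    intro j hj
    by_contra hlt
    push_neg at hlt
    have h1 : cle F (u ^ ((n : ℤ) * (ξ.2 + 1))) (u ^ j) := cle_zpow_le hF hu1 (le_of_lt hlt)
    have h2 := cle_trans hF h1 hj
    rw [key] at h2
    have := (cle_zel_zpow_iff hF (ξ.2 + 1) ξ).mp h2
    omega
  have hne : ∃ j : ℤ, cle F (u ^ j) ξ := by
    refine ⟨(n : ℤ) * ξ.2, ?_⟩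
    rw [key]
    exact (cle_zel_zpow_iff hF ξ.2 ξ).mpr le_rfl
  obtain ⟨ub, hub, hmax⟩ := Int.exists_greatest_of_bdd ⟨_, hbdd⟩ hne
  refine ⟨ub, hub, fun hc => ?_⟩
  have := hmax _ hc
  omega

open Classical in
noncomputable def height (u : L F) (ξ : L F) : ℤ :=
  if h : ∃ j : ℤ, cle F (u ^ j) ξ ∧ ¬ cle F (u ^ (j + 1)) ξ then h.choose else 0

lemma height_spec (hF : IsCircularOrdering F) (hn : 1 ≤ n) {u : L F}
    (huZ : u ^ (n : ℤ) = zel F) (ξ : L F) :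
    cle F (u ^ (height u ξ)) ξ ∧ ¬ cle F (u ^ (height u ξ + 1)) ξ := by
  have h := exists_height hF hn huZ ξ
  unfold height
  rw [dif_pos h]
  exact h.choose_spec

lemma height_unique (hF : IsCircularOrdering F) (hn : 1 ≤ n) {u : L F}
    (huZ : u ^ (n : ℤ) = zel F) {ξ : L F} {j : ℤ}
    (h1 : cle F (u ^ j) ξ) (h2 : ¬ cle F (u ^ (j + 1)) ξ) : j = height u ξ := by
  have hu1 := one_le_u hF huZ
  obtain ⟨s1, s2⟩ := height_spec hF hn huZ ξ
  by_contra hne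
  rcases lt_or_gt_of_ne hne with hlt | hlt
  · -- j < height : then j+1 ≤ height, u^{j+1} ≤ u^{height} ≤ ξ
    exact h2 (cle_trans hF (cle_zpow_le hF hu1 (by omega)) s1)
  · exact s2 (cle_trans hF (cle_zpow_le hF hu1 (by omega)) h1)

lemma cle_upow_iff (hF : IsCircularOrdering F) (hn : 1 ≤ n) {u : L F}
    (huZ : u ^ (n : ℤ) = zel F) (ξ : L F) (j : ℤ) :
    cle F (u ^ j) ξ ↔ j ≤ height u ξ := by
  have hu1 := one_le_u hF huZ
  obtain ⟨s1, s2⟩ := height_spec hF hn huZ ξ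
  constructor
  · intro h
    by_contra hc
    push_neg at hc
    exact s2 (cle_trans hF (cle_zpow_le hF hu1 (by omega)) h)
  · intro h
    exact cle_trans hF (cle_zpow_le hF hu1 h) s1

lemma zel_zpow_comm (t : ℤ) (x : L F) : x * (zel F) ^ t = (zel F) ^ t * x := by
  have hc : Commute (zel F) x := zel_central x
  exact (hc.zpow_left t).eq.symm

lemma height_mul_zel (hF : IsCircularOrdering F) (hn : 1 ≤ n) {u : L F}
    (huZ : u ^ (n : ℤ) = zel F) (ξ : L F) (t : ℤ) :
    height u (ξ * (zel F) ^ t) = height u ξ + (n : ℤ) * t := by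
  obtain ⟨s1, s2⟩ := height_spec hF hn huZ ξ
  have key : ∀ j : ℤ, u ^ (j + (n:ℤ) * t) = u ^ j * (zel F) ^ t := by
    intro j; rw [zpow_add, zpow_mul, huZ]
  refine (height_unique hF hn huZ ?_ ?_).symm
  · rw [key, zel_zpow_comm, zel_zpow_comm _ ξ, cle_mul_left_iff]
    exact s1
  · have e : height u ξ + (n:ℤ) * t + 1 = (height u ξ + 1) + (n:ℤ) * t := by ring
    rw [e, key, zel_zpow_comm, zel_zpow_comm _ ξ, cle_mul_left_iff]
    exact s2

lemma height_one (hF : IsCircularOrdering F) (hn : 1 ≤ n) {u : L F}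
    (huZ : u ^ (n : ℤ) = zel F) : height u (1 : L F) = 0 := by
  refine (height_unique hF hn huZ ?_ ?_).symm
  · rw [zpow_zero]; exact cle_refl 1
  · intro hc
    rw [zero_add, zpow_one] at hc
    exact u_ne_one hF huZ (cle_antisymm hF hc (one_le_u hF huZ))

lemma height_zel (hF : IsCircularOrdering F) (hn : 1 ≤ n) {u : L F}
    (huZ : u ^ (n : ℤ) = zel F) : height u (zel F) = (n : ℤ) := by
  have := height_mul_zel hF hn huZ 1 1
  rw [height_one hF hn huZ] at this
  simpa using this

lemma height_mul (hF : IsCircularOrdering F) (hn : 1 ≤ n) {u : L F}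
    (huZ : u ^ (n : ℤ) = zel F) (hucomm : ∀ x : L F, u * x = x * u) (ξ η : L F) :
    height u (ξ * η) = height u ξ + height u η ∨
    height u (ξ * η) = height u ξ + height u η + 1 := by
  have hu1 := one_le_u hF huZ
  have ucomm : ∀ (j : ℤ) (x : L F), x * u ^ j = u ^ j * x := by
    intro j x
    have hc : Commute u x := hucomm x
    exact (hc.zpow_left j).eq.symm
  obtain ⟨sξ1, sξ2⟩ := height_spec hF hn huZ ξ
  obtain ⟨sη1, sη2⟩ := height_spec hF hn huZ η
  have lower : cle F (u ^ (height u ξ + height u η)) (ξ * η) := by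
    have h1 : cle F (u ^ (height u η) * u ^ (height u ξ)) (u ^ (height u η) * ξ) :=
      (cle_mul_left_iff _ _ _).mpr sξ1
    have h2 : cle F (ξ * u ^ (height u η)) (ξ * η) := (cle_mul_left_iff _ _ _).mpr sη1
    rw [ucomm] at h2
    have := cle_trans hF h1 h2
    rw [← zpow_add, add_comm] at this
    exact this
  have upper : ¬ cle F (u ^ (height u ξ + height u η + 2)) (ξ * η) := by
    intro hc
    have hηle : cle F η (u ^ (height u η + 1)) := by
      rcases cle_total hF η (u ^ (height u η + 1)) with h | h
      · exact h
      · exact absurd h sη2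
    have hξle : cle F ξ (u ^ (height u ξ + 1)) := by
      rcases cle_total hF ξ (u ^ (height u ξ + 1)) with h | h
      · exact h
      · exact absurd h sξ2
    have h1 : cle F (ξ * η) (u ^ (height u η + 1) * ξ) := by
      have := (cle_mul_left_iff ξ η (u ^ (height u η + 1))).mpr hηle
      rw [ucomm] at this
      exact this
    have h2 : cle F (u ^ (height u η + 1) * ξ) (u ^ (height u ξ + height u η + 2)) := by
      have := (cle_mul_left_iff (u ^ (height u η + 1)) ξ (u ^ (height u ξ + 1))).mpr hξle
      rw [← zpow_add] at this
      have e : height u η + 1 + (height u ξ + 1) = height u ξ + height u η + 2 := by ring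
      rw [e] at this
      exact this
    have heq : ξ * η = u ^ (height u ξ + height u η + 2) :=
      cle_antisymm hF (cle_trans hF h1 h2) hc
    -- now u^{S+2} ≤ u^{Dη+1} * ξ  gives u^{Dξ+1} ≤ ξ, contradiction
    have h3 : cle F (u ^ (height u ξ + height u η + 2)) (u ^ (height u η + 1) * ξ) := by
      rw [← heq]; exact h1
    have e2 : u ^ (height u ξ + height u η + 2) = u ^ (height u η + 1) * u ^ (height u ξ + 1) := by
      rw [← zpow_add]; ring_nf
    rw [e2, cle_mul_left_iff] at h3
    exact sξ2 h3
  have hS := (cle_upow_iff hF hn huZ (ξ * η) _).mp lower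
  have hS2 : ¬ (height u ξ + height u η + 2 ≤ height u (ξ * η)) :=
    fun hc => upper ((cle_upow_iff hF hn huZ (ξ * η) _).mpr hc)
  omega

end CircAux
end Height

section Specific
namespace CircAux

variable {G : Type*} [Group G] {n : ℕ}
variable {F : (G × Multiplicative (ZMod n)) → (G × Multiplicative (ZMod n)) → ℤ}

lemma torsion_aux (hF : IsCircularOrdering F) {v : L F} {e : ℕ} (he : 1 ≤ e)
    (h1 : cle F 1 v) (hv : v ^ e = 1) : v = 1 := by
  have hm : ∀ m : ℕ, 1 ≤ m → cle F v (v ^ m) := by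
    intro m hm1
    induction m with
    | zero => omega
    | succ k ih =>
        rcases Nat.eq_or_lt_of_le hm1 with h | h
        · have hk0 : k = 0 := by omega
          subst hk0
          simpa using cle_refl (F := F) v
        · have hk : 1 ≤ k := by omega
          have h2 : cle F (v ^ k * 1) (v ^ k * v) := (cle_mul_left_iff _ _ _).mpr h1
          rw [mul_one] at h2
          rw [pow_succ]
          exact cle_trans hF (ih hk) h2
  have := hm e he
  rw [hv] at this
  exact (cle_antisymm hF h1 this).symm

lemma torsion_free (hF : IsCircularOrdering F) {v : L F} {e : ℕ} (he : 1 ≤ e)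
    (hv : v ^ e = 1) : v = 1 := by
  rcases cle_total hF 1 v with h | h
  · exact torsion_aux hF he h hv
  · have h1 : cle F 1 v⁻¹ := by
      unfold cle at h ⊢
      rw [inv_one, one_mul]
      rw [mul_one] at h
      exact h
    have hv' : (v⁻¹) ^ e = 1 := by rw [inv_pow, hv, inv_one]
    have := torsion_aux hF he h1 hv'
    rw [← inv_inv v, this, inv_one]

/-- the canonical lift of the generator of the `ZMod n` factor -/
def wel (F : (G × Multiplicative (ZMod n)) → (G × Multiplicative (ZMod n)) → ℤ) : L F :=
  (((1 : G), Multiplicative.ofAdd (1 : ZMod n)), (0 : ℤ))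

noncomputable def πG (F : (G × Multiplicative (ZMod n)) → (G × Multiplicative (ZMod n)) → ℤ) : L F →* G :=
  (MonoidHom.fst G (Multiplicative (ZMod n))).comp π₁

noncomputable def πM (F : (G × Multiplicative (ZMod n)) → (G × Multiplicative (ZMod n)) → ℤ) :
    L F →* Multiplicative (ZMod n) :=
  (MonoidHom.snd G (Multiplicative (ZMod n))).comp π₁

lemma exists_u (hn : 2 ≤ n) (hF : IsCircularOrdering F) :
    ∃ u : L F, u ^ (n : ℤ) = zel F ∧ (∀ x : L F, u * x = x * u) ∧
      (∀ j : ℤ, ((u ^ j : L F)).1.1 = 1) := by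
  haveI : NeZero n := ⟨by omega⟩
  set w : L F := wel F with hwdef
  -- w ^ n is a power of z
  have hw1 : ((w ^ (n : ℤ)).1 : G × Multiplicative (ZMod n)) = 1 := by
    have h0 : (π₁ (w ^ (n : ℤ)) : G × Multiplicative (ZMod n)) = (π₁ w) ^ (n : ℤ) :=
      map_zpow π₁ w (n : ℤ)
    have h2 : ((π₁ w : G × Multiplicative (ZMod n))) ^ (n : ℤ) = 1 := by
      show (((1 : G), Multiplicative.ofAdd (1 : ZMod n)) :
        G × Multiplicative (ZMod n)) ^ (n : ℤ) = 1
      refine Prod.ext (by simp) ?_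
      show Multiplicative.ofAdd (1 : ZMod n) ^ (n : ℤ) = 1
      rw [← ofAdd_zsmul]
      simp
    show (π₁ (w ^ (n : ℤ)) : G × Multiplicative (ZMod n)) = 1
    rw [h0, h2]
  set q : ℤ := (w ^ (n : ℤ)).2 with hq
  have hwz : w ^ (n : ℤ) = (zel F) ^ q := eq_zel_zpow hw1
  -- gcd q n = 1
  have hgcd : Int.gcd q (n : ℤ) = 1 := by
    by_contra hne
    set e : ℕ := Int.gcd q (n : ℤ) with he
    have hedvdn : (e : ℤ) ∣ (n : ℤ) := Int.gcd_dvd_right q n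
    have hedvdq : (e : ℤ) ∣ q := Int.gcd_dvd_left q n
    have he0 : e ≠ 0 := by
      intro h0
      have := Int.gcd_eq_zero_iff.mp h0
      omega
    have he2 : 2 ≤ e := by omega
    have hedvdn' : e ∣ n := by exact_mod_cast hedvdn
    set v : L F := w ^ ((n / e : ℕ) : ℤ) * (zel F) ^ (-(q / (e : ℤ))) with hv
    have hcomm : Commute (w ^ ((n / e : ℕ) : ℤ)) ((zel F) ^ (-(q / (e : ℤ)))) := by
      have hc1 : Commute (w ^ ((n / e : ℕ) : ℤ)) (zel F) := (zel_central _).symm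
      exact hc1.zpow_right _
    have hve : v ^ e = 1 := by
      rw [hv, hcomm.mul_pow, ← zpow_natCast (w ^ ((n / e : ℕ) : ℤ)),
        ← zpow_natCast ((zel F) ^ (-(q / (e : ℤ)))), ← zpow_mul, ← zpow_mul]
      have e1 : ((n / e : ℕ) : ℤ) * (e : ℤ) = (n : ℤ) := by
        rw [← Nat.cast_mul]
        congr 1
        exact Nat.div_mul_cancel hedvdn'
      have e2 : (-(q / (e : ℤ))) * (e : ℤ) = -q := by
        have := Int.ediv_mul_cancel hedvdq
        rw [neg_mul, this]
      rw [e1, e2, hwz, ← zpow_add]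
      simp
    have hvne : v ≠ 1 := by
      intro hone
      have hM : (πM F v : Multiplicative (ZMod n)) = 1 := by rw [hone, map_one]
      rw [hv, map_mul, map_zpow, map_zpow] at hM
      have hzM : (πM F (zel F)) = 1 := rfl
      have hwM : (πM F w) = Multiplicative.ofAdd (1 : ZMod n) := rfl
      rw [hzM, hwM, one_zpow, mul_one, ← ofAdd_zsmul] at hM
      have h1 : ((n / e : ℕ) : ℤ) • (1 : ZMod n) = 0 :=
        Multiplicative.ofAdd.injective (hM.trans (ofAdd_zero).symm)
      rw [zsmul_eq_mul, mul_one] at h1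
      have h2 : ((n / e : ℕ) : ZMod n) = 0 := by exact_mod_cast h1
      rw [ZMod.natCast_eq_zero_iff] at h2
      have hlt : n / e < n := Nat.div_lt_self (by omega) (by omega)
      have hpos : 0 < n / e := Nat.div_pos (Nat.le_of_dvd (by omega) hedvdn') (by omega)
      have := Nat.le_of_dvd hpos h2
      omega
    exact hvne (torsion_free hF (by omega) hve)
  -- Bezout
  set α : ℤ := Int.gcdA q (n : ℤ) with hα
  set β : ℤ := Int.gcdB q (n : ℤ) with hβ
  have hbez : q * α + (n : ℤ) * β = 1 := by
    have := Int.gcd_eq_gcd_ab q (n : ℤ)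
    rw [hgcd] at this
    simpa using this.symm
  set u : L F := w ^ α * (zel F) ^ β with hu
  have hcommu : Commute (w ^ α) ((zel F) ^ β) := by
    have hc1 : Commute (w ^ α) (zel F) := (zel_central _).symm
    exact hc1.zpow_right _
  have huZ : u ^ (n : ℤ) = zel F := by
    rw [hu, hcommu.mul_zpow, ← zpow_mul, ← zpow_mul]
    have e3 : w ^ (α * (n : ℤ)) = (zel F) ^ (q * α) := by
      rw [mul_comm α, zpow_mul, hwz, ← zpow_mul, mul_comm]
    rw [e3, ← zpow_add]
    have e4 : q * α + β * (n : ℤ) = 1 := by linarith [hbez]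
    rw [e4, zpow_one]
  have huG : (πG F u : G) = 1 := by
    rw [hu, map_mul, map_zpow, map_zpow]
    have h1 : (πG F w : G) = 1 := rfl
    have h2 : (πG F (zel F) : G) = 1 := rfl
    rw [h1, h2, one_zpow, one_zpow, mul_one]
  have hujG : ∀ j : ℤ, ((u ^ j : L F)).1.1 = 1 := by
    intro j
    have h0 : (πG F (u ^ j) : G) = (πG F u) ^ j := map_zpow _ _ _
    rw [huG, one_zpow] at h0
    exact h0
  have huM : (πM F u : Multiplicative (ZMod n)) = Multiplicative.ofAdd ((α : ZMod n)) := by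
    rw [hu, map_mul, map_zpow, map_zpow]
    have h1 : (πM F w) = Multiplicative.ofAdd (1 : ZMod n) := rfl
    have h2 : (πM F (zel F)) = 1 := rfl
    rw [h1, h2, one_zpow, mul_one, ← ofAdd_zsmul, zsmul_eq_mul, mul_one]
  have hqα : ((q : ZMod n)) * ((α : ZMod n)) = 1 := by
    have h0 : ((q * α + (n : ℤ) * β : ℤ) : ZMod n) = 1 := by rw [hbez]; simp
    push_cast at h0
    rw [ZMod.natCast_self] at h0
    simpa using h0
  -- N is cyclic generated by u
  have hNcyc : ∀ v : L F, v.1.1 = 1 → ∃ j : ℤ, v = u ^ j := by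
    intro v hv1
    set c : ZMod n := Multiplicative.toAdd v.1.2 with hc
    set j₀ : ℤ := q * (c.val : ℤ) with hj₀
    have hcv : ((c.val : ℕ) : ZMod n) = c := by
      rw [ZMod.natCast_val, ZMod.cast_id]
    have hM : ((v * u ^ (-j₀)).1 : G × Multiplicative (ZMod n)) = 1 := by
      refine Prod.ext ?_ ?_
      · show (v * u ^ (-j₀)).1.1 = 1
        rw [mul_fst]
        show v.1.1 * (u ^ (-j₀)).1.1 = 1
        rw [hv1, hujG, one_mul]
      · show (v * u ^ (-j₀)).1.2 = 1
        rw [mul_fst]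
        show v.1.2 * (πM F) (u ^ (-j₀)) = 1
        rw [map_zpow, huM, ← ofAdd_zsmul, zsmul_eq_mul]
        have hv2 : v.1.2 = Multiplicative.ofAdd c := rfl
        rw [hv2, ← ofAdd_add]
        have h7 : ((j₀ : ℤ) : ZMod n) = (q : ZMod n) * c := by
          rw [hj₀]
          push_cast
          rw [hcv]
        have e6 : c + ((-j₀ : ℤ) : ZMod n) * (α : ZMod n) = 0 := by
          push_cast
          rw [h7]
          linear_combination (-(c : ZMod n)) * hqα
        rw [e6, ofAdd_zero]
    have hs := eq_zel_zpow hM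
    set s : ℤ := (v * u ^ (-j₀)).2 with hsdef
    refine ⟨j₀ + (n : ℤ) * s, ?_⟩
    have h2 : (zel F) ^ s = u ^ ((n : ℤ) * s) := by rw [zpow_mul, huZ]
    have h3 : v = u ^ ((n : ℤ) * s) * u ^ (j₀) := by
      rw [← h2, ← hs, mul_assoc, ← zpow_add]
      simp
    rw [h3, ← zpow_add, add_comm]
  -- centrality
  have hucomm : ∀ x : L F, u * x = x * u := by
    intro x
    have hηG : (x * u * x⁻¹).1.1 = 1 := by
      have h0 : (πG F (x * u * x⁻¹) : G) = πG F x * πG F u * (πG F x)⁻¹ := by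
        rw [map_mul, map_mul, map_inv]
      rw [huG] at h0
      simp only [mul_one, mul_inv_cancel] at h0
      exact h0
    obtain ⟨j, hj⟩ := hNcyc _ hηG
    have hconj : (x * u * x⁻¹) ^ (n : ℤ) = x * u ^ (n : ℤ) * x⁻¹ := by
      rw [← MulAut.conj_apply, ← map_zpow, MulAut.conj_apply]
    have hzel : x * zel F * x⁻¹ = zel F := by
      rw [← zel_central, mul_assoc, mul_inv_cancel, mul_one]
    have h1 : (x * u * x⁻¹) ^ (n : ℤ) = zel F := by rw [hconj, huZ, hzel]
    have h2 : (x * u * x⁻¹) ^ (n : ℤ) = (zel F) ^ j := by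
      rw [hj, ← zpow_mul, mul_comm, zpow_mul, huZ]
    have h3 : (zel F) ^ j = zel F := by rw [← h2, h1]
    have hj1 : j = 1 := by
      have e1 : ((zel F) ^ j).2 = j := by rw [zel_zpow]
      have e2 : (zel F).2 = 1 := rfl
      rw [h3, e2] at e1
      omega
    rw [hj1, zpow_one] at hj
    nth_rewrite 1 [← hj]
    group
  exact ⟨u, huZ, hucomm, hujG⟩

end CircAux
end Specific

section Forward
namespace CircAux

variable {G : Type*} [Group G] {n : ℕ}
variable {F : (G × Multiplicative (ZMod n)) → (G × Multiplicative (ZMod n)) → ℤ}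

lemma forward (hn : 2 ≤ n) (hF : IsCircularOrdering F) :
    ∃ f : G → G → ℤ, IsCircularOrdering f ∧
      ∃ d : G → ZMod n, d 1 = 0 ∧
        ∀ g h : G, (f g h : ZMod n) = d g + d h - d (g * h) := by
  obtain ⟨u, huZ, hucomm, hujG⟩ := exists_u hn hF
  have hn1 : 1 ≤ n := by omega
  set x : G → L F := fun g => (((g, 1) : G × Multiplicative (ZMod n)), (0 : ℤ)) with hx
  have hx1 : x 1 = 1 := rfl
  have hmk : ∀ a b : G, ((a, (1 : Multiplicative (ZMod n))) : G × Multiplicative (ZMod n)) *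
      (b, 1) = (a * b, 1) := by
    intro a b
    rw [Prod.mk_mul_mk, one_mul]
  have hx_mul : ∀ g h : G, x g * x h = x (g * h) * (zel F) ^ (F (g, 1) (h, 1)) := by
    intro g h
    have hk : ∀ k : ℤ, x (g * h) * (zel F) ^ k = (((g * h, 1) : G × Multiplicative (ZMod n)), k) := by
      intro k
      rw [zel_zpow]
      refine Prod.ext ?_ ?_
      · show (g * h, 1) * (1 : G × Multiplicative (ZMod n)) = (g * h, 1); exact mul_one _
      · show (0 : ℤ) + k + fx F (g * h, 1) 1 = k
        rw [fx_eq (gd_of hF)]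
        show (0 : ℤ) + k + F (g * h, 1) 1 = k
        rw [(hF.2.1 _).2]; ring
    rw [hk]
    refine Prod.ext ?_ ?_
    · rw [mul_fst]
      exact hmk g h
    · rw [mul_snd, fx_eq (gd_of hF)]
      show (0 : ℤ) + 0 + F (g, 1) (h, 1) = F (g, 1) (h, 1)
      ring
  set f' : G → G → ℤ :=
    fun g h => height u (x g * x h) - height u (x g) - height u (x h) with hf'
  have hxz : ∀ g h : G, height u (x g * x h) =
      height u (x (g * h)) + (n : ℤ) * F (g, 1) (h, 1) := by
    intro g h
    rw [hx_mul g h, height_mul_zel hF hn1 huZ]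
  have hD1 : height u (x 1) = 0 := by
    rw [hx1]
    exact height_one hF hn1 huZ
  -- values in {0, 1}
  have h01' : ∀ g h : G, f' g h = 0 ∨ f' g h = 1 := by
    intro g h
    have := height_mul hF hn1 huZ hucomm (x g) (x h)
    show height u (x g * x h) - height u (x g) - height u (x h) = 0 ∨
      height u (x g * x h) - height u (x g) - height u (x h) = 1
    rcases this with h' | h' <;> omega
  -- identities
  have hid' : ∀ g : G, f' 1 g = 0 ∧ f' g 1 = 0 := by
    intro g
    constructor
    · show height u (x 1 * x g) - height u (x 1) - height u (x g) = 0
      rw [hx1, one_mul]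
      have : height u ((1 : L F)) = 0 := height_one hF hn1 huZ
      omega
    · show height u (x g * x 1) - height u (x g) - height u (x 1) = 0
      rw [hx1, mul_one]
      have : height u ((1 : L F)) = 0 := height_one hF hn1 huZ
      omega
  -- u commutes with powers
  have hucz : ∀ (j : ℤ) (y : L F), y * u ^ j = u ^ j * y := by
    intro j y
    have hc : Commute u y := hucomm y
    exact (hc.zpow_left j).eq.symm
  -- inverses
  have hinv' : ∀ g : G, g ≠ 1 → f' g g⁻¹ = 1 := by
    intro g hg
    have hne : ((g, (1 : Multiplicative (ZMod n))) : G × Multiplicative (ZMod n)) ≠ 1 :=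
      fun h' => hg (congrArg Prod.fst h')
    have hFinv : F (g, 1) ((g, 1) : G × Multiplicative (ZMod n))⁻¹ = 1 := hF.2.2.1 _ hne
    have hinvmk : (((g, 1) : G × Multiplicative (ZMod n)))⁻¹ = (g⁻¹, 1) := by
      rw [Prod.inv_mk, inv_one]
    have hAB : x g * x g⁻¹ = zel F := by
      rw [hx_mul g g⁻¹, mul_inv_cancel, hx1, one_mul]
      rw [hinvmk] at hFinv
      rw [hFinv, zpow_one]
    have hhAB : height u (x g * x g⁻¹) = (n : ℤ) := by
      rw [hAB]
      exact height_zel hF hn1 huZ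
    have hsum : height u (x g) + height u (x g⁻¹) = (n : ℤ) - 1 := by
      rcases height_mul hF hn1 huZ hucomm (x g) (x g⁻¹) with h' | h'
      · -- impossible case
        exfalso
        rw [hhAB] at h'
        have hBeq : x g⁻¹ = (x g)⁻¹ * zel F := by
          rw [← hAB]; group
        have sA1 := (height_spec hF hn1 huZ (x g)).1
        have sB1 : cle F (u ^ (height u (x g⁻¹))) ((x g)⁻¹ * zel F) := by
          rw [← hBeq]
          exact (height_spec hF hn1 huZ (x g⁻¹)).1
        have h2 : cle F (x g * u ^ (height u (x g⁻¹))) (x g * ((x g)⁻¹ * zel F)) :=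
          (cle_mul_left_iff _ _ _).mpr sB1
        rw [mul_inv_cancel_left, hucz] at h2
        have hzu : zel F = u ^ (height u (x g⁻¹)) * u ^ (height u (x g)) := by
          rw [← zpow_add, ← huZ]
          congr 1
          omega
        rw [hzu, cle_mul_left_iff] at h2
        have heq : u ^ (height u (x g)) = x g := cle_antisymm hF sA1 h2
        have : (x g).1.1 = 1 := by rw [← heq]; exact hujG _
        exact hg this
      · rw [hhAB] at h'
        omega
    show height u (x g * x g⁻¹) - height u (x g) - height u (x g⁻¹) = 1
    rw [hhAB]
    omega
  -- cocycle
  have he : ∀ a b : G, f' a b =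
      height u (x (a * b)) + (n : ℤ) * F (a, 1) (b, 1)
        - height u (x a) - height u (x b) := by
    intro a b
    show height u (x a * x b) - height u (x a) - height u (x b) = _
    rw [hxz]
  have hcoc' : ∀ g h k : G, f' h k - f' (g * h) k + f' g (h * k) - f' g h = 0 := by
    intro g h k
    have hco := hF.2.2.2 (g, 1) (h, 1) (k, 1)
    rw [hmk g h, hmk h k] at hco
    rw [he, he, he, he, mul_assoc]
    linear_combination (n : ℤ) * hco
  refine ⟨f', ⟨h01', hid', hinv', hcoc'⟩,
    fun g => ((-(height u (x g)) : ℤ) : ZMod n), ?_, ?_⟩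
  · show ((-(height u (x 1)) : ℤ) : ZMod n) = 0
    rw [hD1]
    simp
  · intro g h
    show ((f' g h : ℤ) : ZMod n) = _
    rw [he g h]
    push_cast [ZMod.natCast_self]
    ring
end CircAux
end Forward

section Backward
namespace CircAux

variable {n : ℕ}

lemma val_L1 [NeZero n] (hn : 2 ≤ n) (t : ZMod n) :
    (t.val : ℤ) + ((-t - 1).val : ℤ) = (n : ℤ) - 1 := by
  haveI : Fact (1 < n) := ⟨by omega⟩
  have hvt := ZMod.val_lt t
  have h1 : -t - 1 = -(t + 1) := by ring
  by_cases h : t + 1 = 0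
  · have ht : t = -1 := eq_neg_of_add_eq_zero_left h
    rw [h1, h, neg_zero, ZMod.val_zero, ht, ZMod.neg_val, if_neg one_ne_zero, ZMod.val_one]
    omega
  · have hv1 : (t + 1).val = (t.val + 1) % n := by rw [ZMod.val_add, ZMod.val_one]
    have hne0 : (t + 1).val ≠ 0 := fun hc => h ((ZMod.val_eq_zero _).mp hc)
    have hlt' : t.val + 1 < n := by
      rcases Nat.lt_or_ge (t.val + 1) n with h' | h'
      · exact h'
      · exfalso
        apply hne0
        have : t.val + 1 = n := by omega
        rw [hv1, this, Nat.mod_self]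
    rw [h1, ZMod.neg_val, if_neg h, hv1, Nat.mod_eq_of_lt hlt']
    omega

lemma val_L2 [NeZero n] {t : ZMod n} (ht : t ≠ 0) :
    (t.val : ℤ) + ((-t).val : ℤ) = (n : ℤ) := by
  have hvt := ZMod.val_lt t
  have h0 : t.val ≠ 0 := fun hc => ht ((ZMod.val_eq_zero _).mp hc)
  rw [ZMod.neg_val, if_neg ht]
  omega

variable {G : Type*} [Group G]

lemma backward (hn : 2 ≤ n) {f : G → G → ℤ} (hf : IsCircularOrdering f)
    {d : G → ZMod n} (hd1 : d 1 = 0)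
    (hcob : ∀ g h : G, (f g h : ZMod n) = d g + d h - d (g * h)) :
    ∃ F : (G × Multiplicative (ZMod n)) → (G × Multiplicative (ZMod n)) → ℤ,
      IsCircularOrdering F := by
  haveI : NeZero n := ⟨by omega⟩
  set S : (G × Multiplicative (ZMod n)) → ℤ :=
    fun x => ((Multiplicative.toAdd x.2 - d x.1).val : ℤ) with hS
  set Nm : (G × Multiplicative (ZMod n)) → (G × Multiplicative (ZMod n)) → ℤ :=
    fun x y => S x + S y - S (x * y) + f x.1 y.1 with hNm
  have hvalN : ∀ t : ZMod n, ((t.val : ℕ) : ZMod n) = t := by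
    intro t
    rw [ZMod.natCast_val, ZMod.cast_id]
  have hSbd : ∀ x, 0 ≤ S x ∧ S x ≤ (n : ℤ) - 1 := by
    intro x
    have := ZMod.val_lt (Multiplicative.toAdd x.2 - d x.1)
    constructor
    · positivity
    · show ((Multiplicative.toAdd x.2 - d x.1).val : ℤ) ≤ (n : ℤ) - 1
      omega
  have hdvd : ∀ x y, (n : ℤ) ∣ Nm x y := by
    intro x y
    rw [← ZMod.intCast_zmod_eq_zero_iff_dvd]
    have h0 : ((Nm x y : ℤ) : ZMod n) =
        (Multiplicative.toAdd x.2 - d x.1) + (Multiplicative.toAdd y.2 - d y.1)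
          - (Multiplicative.toAdd x.2 + Multiplicative.toAdd y.2 - d (x.1 * y.1))
          + ((f x.1 y.1 : ℤ) : ZMod n) := by
      show (((S x + S y - S (x * y) + f x.1 y.1 : ℤ)) : ZMod n) = _
      have e1 : ((S x : ℤ) : ZMod n) = Multiplicative.toAdd x.2 - d x.1 := by
        show (((Multiplicative.toAdd x.2 - d x.1).val : ℤ) : ZMod n) = _
        push_cast
        rw [hvalN]
      have e2 : ((S y : ℤ) : ZMod n) = Multiplicative.toAdd y.2 - d y.1 := by
        show (((Multiplicative.toAdd y.2 - d y.1).val : ℤ) : ZMod n) = _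
        push_cast
        rw [hvalN]
      have e3 : ((S (x * y) : ℤ) : ZMod n) =
          Multiplicative.toAdd x.2 + Multiplicative.toAdd y.2 - d (x.1 * y.1) := by
        show (((Multiplicative.toAdd (x * y).2 - d (x * y).1).val : ℤ) : ZMod n) = _
        push_cast
        rw [hvalN]
        rw [show (x * y).2 = x.2 * y.2 from rfl, show (x * y).1 = x.1 * y.1 from rfl,
          toAdd_mul]
      push_cast at e1 e2 e3 ⊢
      rw [e1, e2, e3]
    rw [h0, hcob x.1 y.1]
    push_cast
    ring
  have hNF : ∀ x y, Nm x y = 0 ∨ Nm x y = n := by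
    intro x y
    obtain ⟨k, hk⟩ := hdvd x y
    have hx1 := hSbd x
    have hx2 := hSbd y
    have hx3 := hSbd (x * y)
    have hfb : f x.1 y.1 = 0 ∨ f x.1 y.1 = 1 := hf.1 _ _
    have hub : Nm x y ≤ 2 * (n : ℤ) - 1 := by
      show S x + S y - S (x * y) + f x.1 y.1 ≤ 2 * (n : ℤ) - 1
      omega
    have hlb : -(n : ℤ) + 1 ≤ Nm x y := by
      show -(n : ℤ) + 1 ≤ S x + S y - S (x * y) + f x.1 y.1
      omega
    have hnpos : (0 : ℤ) < n := by exact_mod_cast (show 0 < n by omega)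
    have hk0 : 0 ≤ k := by nlinarith
    have hk1 : k ≤ 1 := by nlinarith
    interval_cases k
    · left; rw [hk]; ring
    · right; rw [hk]; ring
  classical
  set F : (G × Multiplicative (ZMod n)) → (G × Multiplicative (ZMod n)) → ℤ :=
    fun x y => if Nm x y = n then 1 else 0 with hF
  have hNmF : ∀ x y, Nm x y = (n : ℤ) * F x y := by
    intro x y
    rcases hNF x y with h | h
    · rw [h, hF]
      simp only
      rw [if_neg]
      · ring
      · rw [h] at *
        intro hc
        omega
    · rw [h, hF]
      simp only
      rw [if_pos h]
      ring
  have hF01 : ∀ x y, F x y = 0 ∨ F x y = 1 := by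
    intro x y
    rw [hF]
    simp only
    split <;> simp
  have hn0 : (n : ℤ) ≠ 0 := by exact_mod_cast (show n ≠ 0 by omega)
  refine ⟨F, hF01, ?_, ?_, ?_⟩
  · -- identities
    intro y
    have hS1 : S 1 = 0 := by
      show ((Multiplicative.toAdd (1 : G × Multiplicative (ZMod n)).2
        - d (1 : G × Multiplicative (ZMod n)).1).val : ℤ) = 0
      rw [show (1 : G × Multiplicative (ZMod n)).2 = 1 from rfl,
        show (1 : G × Multiplicative (ZMod n)).1 = 1 from rfl, hd1, toAdd_one]
      simp
    constructor
    · have hNm0 : Nm 1 y = 0 := by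
        show S 1 + S y - S (1 * y) + f (1 : G × Multiplicative (ZMod n)).1 y.1 = 0
        rw [one_mul, hS1, show (1 : G × Multiplicative (ZMod n)).1 = 1 from rfl,
          (hf.2.1 y.1).1]
        ring
      have := hNmF 1 y
      rw [hNm0] at this
      have := (mul_eq_zero.mp this.symm).resolve_left hn0
      exact this
    · have hNm0 : Nm y 1 = 0 := by
        show S y + S 1 - S (y * 1) + f y.1 (1 : G × Multiplicative (ZMod n)).1 = 0
        rw [mul_one, hS1, show (1 : G × Multiplicative (ZMod n)).1 = 1 from rfl,
          (hf.2.1 y.1).2]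
        ring
      have := hNmF y 1
      rw [hNm0] at this
      have := (mul_eq_zero.mp this.symm).resolve_left hn0
      exact this
  · -- inverses
    intro x hx
    have hS1 : S 1 = 0 := by
      show ((Multiplicative.toAdd (1 : G × Multiplicative (ZMod n)).2
        - d (1 : G × Multiplicative (ZMod n)).1).val : ℤ) = 0
      rw [show (1 : G × Multiplicative (ZMod n)).2 = 1 from rfl,
        show (1 : G × Multiplicative (ZMod n)).1 = 1 from rfl, hd1, toAdd_one]
      simp
    have hdinv : d x.1⁻¹ = ((f x.1 x.1⁻¹ : ℤ) : ZMod n) - d x.1 := by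
      have hc := hcob x.1 x.1⁻¹
      rw [mul_inv_cancel, hd1] at hc
      linear_combination -hc
    set t : ZMod n := Multiplicative.toAdd x.2 - d x.1 with hts
    have hSx : S x = ((t.val : ℕ) : ℤ) := rfl
    have hSinv : S x⁻¹ = (((-t - ((f x.1 x.1⁻¹ : ℤ) : ZMod n)).val : ℕ) : ℤ) := by
      have harg0 : Multiplicative.toAdd (x⁻¹).2 - d (x⁻¹).1
          = -t - ((f x.1 x.1⁻¹ : ℤ) : ZMod n) := by
        rw [show (x⁻¹).2 = x.2⁻¹ from rfl, show (x⁻¹).1 = x.1⁻¹ from rfl, toAdd_inv,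
          hdinv, hts]
        ring
      show ((Multiplicative.toAdd (x⁻¹).2 - d (x⁻¹).1).val : ℤ) = _
      rw [harg0]
    have hNmdef : Nm x x⁻¹ = S x + S x⁻¹ - S (x * x⁻¹) + f x.1 x.1⁻¹ := rfl
    have hNmn : Nm x x⁻¹ = n := by
      by_cases hg1 : x.1 = 1
      · have hx2 : x.2 ≠ 1 := by
          intro hc
          exact hx (Prod.ext hg1 hc)
        have hfval : f x.1 x.1⁻¹ = 0 := by
          rw [hg1, inv_one]
          exact (hf.2.1 1).1
        have htne : t ≠ 0 := by
          rw [hts, hg1, hd1, sub_zero]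
          intro hc
          apply hx2
          have h9 : Multiplicative.toAdd x.2
              = Multiplicative.toAdd (1 : Multiplicative (ZMod n)) := by
            rw [hc, toAdd_one]
          exact Multiplicative.toAdd.injective h9
        have harg : -t - ((f x.1 x.1⁻¹ : ℤ) : ZMod n) = -t := by
          rw [hfval]
          push_cast
          ring
        have hSinv' : S x⁻¹ = (((-t).val : ℕ) : ℤ) := by rw [hSinv, harg]
        have vv := val_L2 (n := n) htne
        rw [hNmdef, mul_inv_cancel, hS1, hSx, hSinv', hfval]
        omega
      · have hfval : f x.1 x.1⁻¹ = 1 := hf.2.2.1 x.1 hg1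
        have harg : -t - ((f x.1 x.1⁻¹ : ℤ) : ZMod n) = -t - 1 := by
          rw [hfval]
          push_cast
          ring
        have hSinv' : S x⁻¹ = (((-t - 1).val : ℕ) : ℤ) := by rw [hSinv, harg]
        have vv := val_L1 hn t
        rw [hNmdef, mul_inv_cancel, hS1, hSx, hSinv', hfval]
        omega
    have h1 := hNmF x x⁻¹
    rw [hNmn] at h1
    have h2 : (n : ℤ) * 1 = (n : ℤ) * F x x⁻¹ := by rw [mul_one]; exact h1
    exact (mul_left_cancel₀ hn0 h2).symm
  · -- cocycle
    intro x y w
    have hNmcoc : Nm y w - Nm (x * y) w + Nm x (y * w) - Nm x y = 0 := by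
      have hco := hf.2.2.2 x.1 y.1 w.1
      show (S y + S w - S (y * w) + f y.1 w.1)
        - (S (x * y) + S w - S ((x * y) * w) + f (x * y).1 w.1)
        + (S x + S (y * w) - S (x * (y * w)) + f x.1 (y * w).1)
        - (S x + S y - S (x * y) + f x.1 y.1) = 0
      rw [mul_assoc, show ((x * y).1 : G) = x.1 * y.1 from rfl,
        show ((y * w).1 : G) = y.1 * w.1 from rfl]
      linarith
    rw [hNmF, hNmF, hNmF, hNmF] at hNmcoc
    have h2 : (n : ℤ) * (F y w - F (x * y) w + F x (y * w) - F x y) = 0 := by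
      linear_combination hNmcoc
    rcases mul_eq_zero.mp h2 with h | h
    · exact absurd h hn0
    · exact h

end CircAux
end Backward


/-- `G × ℤ/nℤ` is circularly-orderable if and only if `G` admits a circular ordering `f`
whose reduction mod `n` is a `ℤ/nℤ`-valued coboundary. -/
theorem product_circularlyOrderable_iff_mod_n_coboundary {G : Type*} [Group G]
    (n : ℕ) (hn : 2 ≤ n) :
    CircularlyOrderable (G × Multiplicative (ZMod n)) ↔
      ∃ f : G → G → ℤ, IsCircularOrdering f ∧
        ∃ d : G → ZMod n, d 1 = 0 ∧
          ∀ g h : G, (f g h : ZMod n) = d g + d h - d (g * h) := by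
  constructor
  · rintro ⟨F, hF⟩
    exact CircAux.forward hn hF
  · rintro ⟨f, hf, d, hd1, hcob⟩
    exact CircAux.backward hn hf hd1 hcob
end
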